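/- arXiv:2401.07631 — 5 statements merged into one kernel-verified Lean document; each statement's English description precedes it below -/
import Mathlib

section
/- If a homogeneous polynomial f ∈ ℂ[x_1,…,x_n]_d has a local border Waring rank decomposition with r summands and base ℓ, then f has a standard local border Waring rank decomposition with r summands and the same base ℓ. -/
open MvPolynomial

/-- A polynomial `F` over formal Laurent series in `ε` converges coefficient-wise
to `f : ℂ[x]` as `ε → 0`: every coefficient of `F` is regular at `ε = 0`
(no negative-order terms in its Laurent expansion) and its value at `ε = 0`
is the corresponding coefficient of `f`. -/
def ConvergesTo (n : ℕ) (F : MvPolynomial (Fin n) (LaurentSeries ℂ))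
    (f : MvPolynomial (Fin n) ℂ) : Prop :=
  ∀ m : Fin n →₀ ℕ,
    (∀ i : ℤ, i < 0 → (coeff m F).coeff i = 0) ∧ (coeff m F).coeff 0 = coeff m f

/-- The lowest-order term of the Laurent expansion of `ℓ ∈ ℂ((ε))[x]` is
`ε^q · L` with `L ≠ 0`: all coefficients of `ℓ` vanish in orders below `q`,
and the order-`q` coefficients form the nonzero polynomial `L`. -/
def LowestTermIs (n : ℕ) (ℓ : MvPolynomial (Fin n) (LaurentSeries ℂ)) (q : ℤ)
    (L : MvPolynomial (Fin n) ℂ) : Prop :=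
  L ≠ 0 ∧ (∀ m : Fin n →₀ ℕ, ∀ i : ℤ, i < q → (coeff m ℓ).coeff i = 0) ∧
    (∀ m : Fin n →₀ ℕ, (coeff m ℓ).coeff q = coeff m L)

lemma hahn_mul_coeff_eq_zero {x y : LaurentSeries ℂ} {p s : ℤ}
    (hx : ∀ i < p, x.coeff i = 0) (hy : ∀ i < s, y.coeff i = 0) :
    ∀ i < p + s, (x * y).coeff i = 0 := by
  intro i hi
  rw [HahnSeries.coeff_mul]
  refine Finset.sum_eq_zero fun ij hij => ?_
  rw [Finset.mem_addAntidiagonal] at hij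
  obtain ⟨h1, h2, h3⟩ := hij
  rw [HahnSeries.mem_support] at h1 h2
  by_cases hp : ij.1 < p
  · exact absurd (hx _ hp) h1
  by_cases hs : ij.2 < s
  · exact absurd (hy _ hs) h2
  exact absurd hi (not_lt.2 (h3 ▸ add_le_add (not_lt.1 hp) (not_lt.1 hs)))

lemma hahn_mul_coeff_zero {x y : LaurentSeries ℂ}
    (hx : ∀ i < (0:ℤ), x.coeff i = 0) (hy : ∀ i < (0:ℤ), y.coeff i = 0) :
    (x * y).coeff 0 = x.coeff 0 * y.coeff 0 := by
  rw [HahnSeries.coeff_mul]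
  rw [Finset.sum_eq_single ((0:ℤ), (0:ℤ))]
  · intro b hb hne
    rw [Finset.mem_addAntidiagonal] at hb
    obtain ⟨h1, h2, h3⟩ := hb
    rw [HahnSeries.mem_support] at h1 h2
    by_cases hp : b.1 < 0
    · exact absurd (hx _ hp) h1
    by_cases hs : b.2 < 0
    · exact absurd (hy _ hs) h2
    exfalso
    apply hne
    have hb1 : b.1 = 0 := by omega
    have hb2 : b.2 = 0 := by omega
    exact Prod.ext hb1 hb2
  · intro h
    rw [Finset.mem_addAntidiagonal] at h
    push_neg at h
    by_cases h0 : x.coeff 0 = 0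
    · rw [h0, zero_mul]
    · have := h ((HahnSeries.mem_support _ _).2 h0)
      by_cases h1 : y.coeff 0 = 0
      · rw [h1, mul_zero]
      · exact absurd (add_zero (0:ℤ)) (this ((HahnSeries.mem_support _ _).2 h1))

lemma hahn_sum_coeff {α : Type*} (s : Finset α) (F : α → LaurentSeries ℂ) (i : ℤ) :
    (∑ a ∈ s, F a).coeff i = ∑ a ∈ s, (F a).coeff i := by
  classical
  induction s using Finset.cons_induction with
  | empty => simp
  | cons a s ha ih => rw [Finset.sum_cons, Finset.sum_cons, HahnSeries.coeff_add, ih]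

lemma hahn_inv_coeff {A : LaurentSeries ℂ} {q : ℤ}
    (hlow : ∀ i < q, A.coeff i = 0) (hq : A.coeff q ≠ 0) :
    ∀ i < -q, (A⁻¹).coeff i = 0 := by
  have hA : A ≠ 0 := HahnSeries.ne_zero_of_coeff_ne_zero hq
  have hord : A.order = q := by
    refine le_antisymm (HahnSeries.order_le_of_coeff_ne_zero hq) ?_
    by_contra h
    exact (HahnSeries.coeff_order_eq_zero.not.2 hA) (hlow _ (not_le.1 h))
  have hAinv : A⁻¹ ≠ 0 := inv_ne_zero hA
  have h1 : (A * A⁻¹).order = A.order + (A⁻¹).order := HahnSeries.order_mul hA hAinv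
  rw [mul_inv_cancel₀ hA, HahnSeries.order_one, hord] at h1
  intro i hi
  exact HahnSeries.coeff_eq_zero_of_lt_order (by omega : i < (A⁻¹).order)

lemma deg_one {n : ℕ} {m : Fin n →₀ ℕ} (hm : Finsupp.degree m = 1) :
    ∃ j, m = Finsupp.single j 1 := by
  classical
  have hsum : ∑ i ∈ m.support, m i = 1 := hm
  have hne : m.support.Nonempty := by
    by_contra h
    rw [Finset.not_nonempty_iff_eq_empty] at h
    rw [h, Finset.sum_empty] at hsum
    exact one_ne_zero hsum.symm
  obtain ⟨j, hj⟩ := hne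
  have hj1 : 1 ≤ m j := Nat.one_le_iff_ne_zero.2 (Finsupp.mem_support_iff.1 hj)
  have hsub : m.support ⊆ {j} := by
    intro j' hj'
    rw [Finset.mem_singleton]
    by_contra hne'
    have hj1' : 1 ≤ m j' := Nat.one_le_iff_ne_zero.2 (Finsupp.mem_support_iff.1 hj')
    have h2 : ({j, j'} : Finset (Fin n)) ⊆ m.support := by
      intro x hx
      rcases Finset.mem_insert.1 hx with rfl | hx
      · exact hj
      · rw [Finset.mem_singleton] at hx; subst hx; exact hj'
    have h3 := Finset.sum_le_sum_of_subset (f := fun i => m i) h2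
    rw [Finset.sum_insert (by simpa using fun h => hne' h.symm), Finset.sum_singleton, hsum] at h3
    omega
  have hmj : m j = 1 := by
    have := Finset.sum_subset hsub (fun x _ hx => Finsupp.notMem_support_iff.1 hx)
    rw [Finset.sum_singleton] at this
    omega
  exact ⟨j, Finsupp.eq_single_iff.2 ⟨hsub, hmj⟩⟩









section CT

variable {n : ℕ}

lemma ct_add {G H : MvPolynomial (Fin n) (LaurentSeries ℂ)} {g h : MvPolynomial (Fin n) ℂ}
    (hG : ConvergesTo n G g) (hH : ConvergesTo n H h) : ConvergesTo n (G + H) (g + h) := by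
  intro m
  rw [coeff_add, coeff_add]
  exact ⟨fun i hi => by rw [HahnSeries.coeff_add, (hG m).1 i hi, (hH m).1 i hi, add_zero],
    by rw [HahnSeries.coeff_add, (hG m).2, (hH m).2]⟩

lemma ct_zero : ConvergesTo n 0 0 := fun m => by simp

lemma ct_one : ConvergesTo n 1 1 := by
  intro m
  classical
  rw [coeff_one, coeff_one]
  by_cases h : 0 = m
  · simp only [if_pos h]
    exact ⟨fun i hi => HahnSeries.coeff_single_of_ne (by omega), HahnSeries.coeff_single_same _ _⟩
  · simp [if_neg h]

lemma ct_mul {G H : MvPolynomial (Fin n) (LaurentSeries ℂ)} {g h : MvPolynomial (Fin n) ℂ}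
    (hG : ConvergesTo n G g) (hH : ConvergesTo n H h) : ConvergesTo n (G * H) (g * h) := by
  intro m
  classical
  constructor
  · intro i hi
    rw [MvPolynomial.coeff_mul, hahn_sum_coeff]
    refine Finset.sum_eq_zero fun p hp => ?_
    exact hahn_mul_coeff_eq_zero ((hG p.1).1) ((hH p.2).1) i (by omega)
  · rw [MvPolynomial.coeff_mul, hahn_sum_coeff, MvPolynomial.coeff_mul]
    refine Finset.sum_congr rfl fun p hp => ?_
    rw [hahn_mul_coeff_zero ((hG p.1).1) ((hH p.2).1), (hG p.1).2, (hH p.2).2]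

lemma ct_sum {α : Type*} (s : Finset α) (G : α → MvPolynomial (Fin n) (LaurentSeries ℂ))
    (g : α → MvPolynomial (Fin n) ℂ) (h : ∀ a ∈ s, ConvergesTo n (G a) (g a)) :
    ConvergesTo n (∑ a ∈ s, G a) (∑ a ∈ s, g a) := by
  classical
  induction s using Finset.cons_induction with
  | empty => simpa using ct_zero
  | cons a s ha ih =>
    rw [Finset.sum_cons, Finset.sum_cons]
    exact ct_add (h a (Finset.mem_cons_self a s)) (ih fun b hb => h b (Finset.mem_cons_of_mem hb))

lemma ct_prod {α : Type*} (s : Finset α) (G : α → MvPolynomial (Fin n) (LaurentSeries ℂ))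
    (g : α → MvPolynomial (Fin n) ℂ) (h : ∀ a ∈ s, ConvergesTo n (G a) (g a)) :
    ConvergesTo n (∏ a ∈ s, G a) (∏ a ∈ s, g a) := by
  classical
  induction s using Finset.cons_induction with
  | empty => simpa using ct_one
  | cons a s ha ih =>
    rw [Finset.prod_cons, Finset.prod_cons]
    exact ct_mul (h a (Finset.mem_cons_self a s)) (ih fun b hb => h b (Finset.mem_cons_of_mem hb))

lemma ct_pow {G : MvPolynomial (Fin n) (LaurentSeries ℂ)} {g : MvPolynomial (Fin n) ℂ}
    (hG : ConvergesTo n G g) (e : ℕ) : ConvergesTo n (G ^ e) (g ^ e) := by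
  induction e with
  | zero => simpa using ct_one
  | succ e ih => rw [pow_succ, pow_succ]; exact ct_mul ih hG

lemma ct_C_mul {a : LaurentSeries ℂ} (ha : ∀ i < (0:ℤ), a.coeff i = 0)
    {G : MvPolynomial (Fin n) (LaurentSeries ℂ)} {g : MvPolynomial (Fin n) ℂ}
    (hG : ConvergesTo n G g) : ConvergesTo n (C a * G) (C (a.coeff 0) * g) := by
  intro m
  rw [coeff_C_mul, coeff_C_mul]
  exact ⟨fun i hi => hahn_mul_coeff_eq_zero ha ((hG m).1) i (by omega),
    by rw [hahn_mul_coeff_zero ha ((hG m).1), (hG m).2]⟩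

lemma ct_X_add {j : Fin n} {t : MvPolynomial (Fin n) (LaurentSeries ℂ)}
    (ht : ∀ m, ∀ i < (1:ℤ), (coeff m t).coeff i = 0) :
    ConvergesTo n (X j + t) (X j) := by
  have h1 : ConvergesTo n (X j) (X j) := by
    intro m
    classical
    rw [coeff_X', coeff_X']
    by_cases h : Finsupp.single j 1 = m
    · simp only [if_pos h]
      exact ⟨fun i hi => HahnSeries.coeff_single_of_ne (by omega), HahnSeries.coeff_single_same _ _⟩
    · simp [if_neg h]
  have h2 : ConvergesTo n t 0 := by
    intro m
    exact ⟨fun i hi => ht m i (by omega), by rw [ht m 0 (by omega), coeff_zero]⟩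
  simpa using ct_add h1 h2

lemma ct_aeval (t : Fin n → MvPolynomial (Fin n) (LaurentSeries ℂ))
    (ht : ∀ j m, ∀ i < (1:ℤ), (coeff m (t j)).coeff i = 0)
    {F : MvPolynomial (Fin n) (LaurentSeries ℂ)} {f : MvPolynomial (Fin n) ℂ}
    (h : ConvergesTo n F f) :
    ConvergesTo n (aeval (fun j => X j + t j) F) f := by
  classical
  have expand : aeval (fun j => X j + t j) F
      = ∑ m ∈ F.support, C (coeff m F) * ∏ j ∈ m.support, (X j + t j) ^ m j := by
    rw [aeval_def, eval₂_eq, algebraMap_eq]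
  have heq : (∑ m ∈ F.support, monomial m (coeff m f)) = f := by
    ext m'
    rw [MvPolynomial.coeff_sum]
    simp_rw [MvPolynomial.coeff_monomial]
    rw [Finset.sum_ite_eq' F.support m' (fun m => coeff m f)]
    by_cases hm : m' ∈ F.support
    · rw [if_pos hm]
    · rw [if_neg hm]
      have h0 : coeff m' F = 0 := by rwa [mem_support_iff, not_not] at hm
      rw [← (h m').2, h0, HahnSeries.coeff_zero]
  rw [expand, ← heq]
  refine ct_sum _ _ _ fun m hm => ?_
  have h1 : ConvergesTo n (∏ j ∈ m.support, (X j + t j) ^ m j)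
      (∏ j ∈ m.support, (X j : MvPolynomial (Fin n) ℂ) ^ m j) :=
    ct_prod _ _ _ fun j _ => ct_pow (ct_X_add (ht j)) (m j)
  have h2 := ct_C_mul ((h m).1) h1
  rw [(h m).2] at h2
  rw [monomial_eq, Finsupp.prod]
  exact h2

end CT

/-- If `f` has a local border Waring rank decomposition with `r` summands and base `ℓbase`,
then `f` has a standard local border decomposition with `r` summands and the same base. -/
theorem stmt5 (n d r : ℕ) (hr : 1 ≤ r) (f : MvPolynomial (Fin n) ℂ)
    (hf : f.IsHomogeneous d)
    (ℓbase : MvPolynomial (Fin n) ℂ) (hbase : ℓbase.IsHomogeneous 1) (hbase0 : ℓbase ≠ 0)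
    (ℓ : Fin r → MvPolynomial (Fin n) (LaurentSeries ℂ))
    (hhom : ∀ k, (ℓ k).IsHomogeneous 1)
    (hconv : ConvergesTo n (∑ k, ℓ k ^ d) f)
    (hlocal : ∀ k, ∃ (q : ℤ) (c : ℂ), c ≠ 0 ∧ LowestTermIs n (ℓ k) q (c • ℓbase)) :
    ∃ ℓ' : Fin r → MvPolynomial (Fin n) (LaurentSeries ℂ),
      (∀ k, (ℓ' k).IsHomogeneous 1) ∧
      ConvergesTo n (∑ k, ℓ' k ^ d) f ∧
      (∀ k, ∃ (q : ℤ) (c : ℂ), c ≠ 0 ∧ LowestTermIs n (ℓ' k) q (c • ℓbase)) ∧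
      (∃ (q : ℤ) (γ : ℂ), γ ≠ 0 ∧ ∀ m : Fin n →₀ ℕ,
        coeff m (ℓ' ⟨0, hr⟩) = HahnSeries.single q (γ * coeff m ℓbase)) := by
  classical
  -- pick a variable occurring in ℓbase
  obtain ⟨m₀, hβ⟩ := MvPolynomial.ne_zero_iff.1 hbase0
  obtain ⟨j₀, rfl⟩ : ∃ j, m₀ = Finsupp.single j 1 := by
    apply deg_one
    have h1 := hbase hβ
    rw [Finsupp.degree_eq_weight_one]; exact h1
  set μ : Fin n →₀ ℕ := Finsupp.single j₀ 1 with hμ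
  set k0 : Fin r := ⟨0, hr⟩ with hk0
  obtain ⟨q₀, c₀, hc₀, hL0ne, hlow0, hq0⟩ := hlocal k0
  set A : LaurentSeries ℂ := coeff μ (ℓ k0) with hA
  have hAlow : ∀ i < q₀, A.coeff i = 0 := fun i hi => hlow0 μ i hi
  have hAq : A.coeff q₀ = c₀ * coeff μ ℓbase := by
    rw [hA, hq0 μ, coeff_smul, smul_eq_mul]
  have hAqne : A.coeff q₀ ≠ 0 := by rw [hAq]; exact mul_ne_zero hc₀ hβ
  have hAne : A ≠ 0 := HahnSeries.ne_zero_of_coeff_ne_zero hAqne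
  have hAinv : ∀ i < -q₀, (A⁻¹).coeff i = 0 := hahn_inv_coeff hAlow hAqne
  set Lb : MvPolynomial (Fin n) (LaurentSeries ℂ) :=
    MvPolynomial.map (HahnSeries.C : ℂ →+* LaurentSeries ℂ) ℓbase with hLb
  set B : MvPolynomial (Fin n) (LaurentSeries ℂ) :=
    C (HahnSeries.single q₀ c₀) * Lb - ℓ k0 with hB
  have hBcoeff : ∀ m, coeff m B
      = HahnSeries.single q₀ (c₀ * coeff m ℓbase) - coeff m (ℓ k0) := by
    intro m
    rw [hB, MvPolynomial.coeff_sub, coeff_C_mul, hLb, coeff_map, HahnSeries.C_apply,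
      HahnSeries.single_mul_single, add_zero]
  have hBlow : ∀ m, ∀ i < q₀ + 1, (coeff m B).coeff i = 0 := by
    intro m i hi
    rw [hBcoeff, HahnSeries.coeff_sub]
    rcases lt_or_eq_of_le (Int.lt_add_one_iff.1 hi) with h | h
    · rw [HahnSeries.coeff_single_of_ne (ne_of_lt h), hlow0 m i h, sub_zero]
    · subst h
      rw [HahnSeries.coeff_single_same, hq0 m, coeff_smul, smul_eq_mul, sub_self]
  set T : MvPolynomial (Fin n) (LaurentSeries ℂ) := C (A⁻¹) * B with hT
  have hTlow : ∀ m, ∀ i < (1:ℤ), (coeff m T).coeff i = 0 := by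
    intro m i hi
    rw [hT, coeff_C_mul]
    exact hahn_mul_coeff_eq_zero hAinv (hBlow m) i (by omega)
  set t : Fin n → MvPolynomial (Fin n) (LaurentSeries ℂ) :=
    fun j => if j = j₀ then T else 0 with htdef
  have ht : ∀ j m, ∀ i < (1:ℤ), (coeff m (t j)).coeff i = 0 := by
    intro j m i hi
    by_cases h : j = j₀
    · rw [htdef]; simp only [if_pos h]; exact hTlow m i hi
    · rw [htdef]; simp [if_neg h]
  -- the substituted linear forms
  have subst_lin : ∀ p : MvPolynomial (Fin n) (LaurentSeries ℂ), p.IsHomogeneous 1 →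
      aeval (fun j => X j + t j) p = p + C (coeff μ p) * T := by
    intro p hp
    have hterm : ∀ m ∈ p.support, (aeval (fun j => X j + t j)) (monomial m (coeff m p))
        = monomial m (coeff m p) + C (coeff μ (monomial m (coeff m p))) * T := by
      intro m hm
      obtain ⟨j, rfl⟩ : ∃ j, m = Finsupp.single j 1 := by
        apply deg_one
        have h1 := hp (mem_support_iff.1 hm)
        rw [Finsupp.degree_eq_weight_one]; exact h1
      rw [aeval_monomial, Finsupp.prod_single_index (by rw [pow_zero]), pow_one, algebraMap_eq]
      by_cases hj : j = j₀
      · subst hj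
        rw [htdef]
        simp only [if_pos rfl]
        rw [MvPolynomial.coeff_monomial, if_pos rfl, mul_add]
        congr 1
        rw [monomial_eq, Finsupp.prod_single_index (by rw [pow_zero]), pow_one]
      · rw [htdef]
        simp only [if_neg hj]
        rw [add_zero, MvPolynomial.coeff_monomial,
          if_neg (by simp [hμ, Finsupp.single_eq_single_iff, hj]), map_zero, zero_mul, add_zero]
        rw [monomial_eq, Finsupp.prod_single_index (by rw [pow_zero]), pow_one]
    conv_lhs => rw [p.as_sum, map_sum]
    rw [Finset.sum_congr rfl hterm, Finset.sum_add_distrib, ← Finset.sum_mul, ← map_sum C,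
      ← MvPolynomial.coeff_sum, ← p.as_sum]
  refine ⟨fun k => ℓ k + C (coeff μ (ℓ k)) * T, ?_, ?_, ?_, ?_⟩
  · -- homogeneity
    have hLbhom : Lb.IsHomogeneous 1 := hbase.map _
    have hBhom : B.IsHomogeneous 1 := by
      refine MvPolynomial.IsHomogeneous.sub ?_ (hhom k0)
      simpa using (isHomogeneous_C _ (HahnSeries.single q₀ c₀)).mul hLbhom
    have hThom : T.IsHomogeneous 1 := by
      simpa using (isHomogeneous_C _ (A⁻¹)).mul hBhom
    intro k
    exact (hhom k).add (by simpa using (isHomogeneous_C _ (coeff μ (ℓ k))).mul hThom)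
  · -- convergence
    have hdecomp : (∑ k, (ℓ k + C (coeff μ (ℓ k)) * T) ^ d)
        = aeval (fun j => X j + t j) (∑ k, ℓ k ^ d) := by
      rw [map_sum]
      refine Finset.sum_congr rfl fun k _ => ?_
      rw [map_pow, subst_lin (ℓ k) (hhom k)]
    rw [hdecomp]
    exact ct_aeval t ht hconv
  · -- locality
    intro k
    obtain ⟨q, c, hc, hLne, hlow, hq⟩ := hlocal k
    have hcorr : ∀ m, ∀ i < q + 1, (C (coeff μ (ℓ k)) * T |> coeff m).coeff i = 0 := by
      intro m i hi
      rw [coeff_C_mul]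
      exact hahn_mul_coeff_eq_zero (fun i hi => hlow μ i hi) (hTlow m) i (by omega)
    refine ⟨q, c, hc, hLne, fun m i hi => ?_, fun m => ?_⟩
    · rw [coeff_add, HahnSeries.coeff_add, hlow m i hi, hcorr m i (by omega), add_zero]
    · rw [coeff_add, HahnSeries.coeff_add, hq m, hcorr m q (by omega), add_zero]
  · -- standardness
    refine ⟨q₀, c₀, hc₀, fun m => ?_⟩
    have hslot : ℓ k0 + C (coeff μ (ℓ k0)) * T = C (HahnSeries.single q₀ c₀) * Lb := by
      rw [hT, ← hA, ← mul_assoc, ← map_mul, mul_inv_cancel₀ hAne, map_one, one_mul, hB]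
      abel
    show coeff m (ℓ k0 + C (coeff μ (ℓ k0)) * T) = _
    rw [hslot, coeff_C_mul, hLb, coeff_map, HahnSeries.C_apply, HahnSeries.single_mul_single,
      add_zero]
end

section
/- Suppose a homogeneous polynomial f ∈ ℂ[x_1,…,x_n]_d has a local border Waring rank decomposition with r summands based at the nonzero linear form ℓ. If d ≥ r − 1, then f = ℓ^{d−r+1} g for some homogeneous polynomial g of degree r − 1. -/
open MvPolynomial

namespace Stmt6Helper

noncomputable section
open Finset

abbrev K := LaurentSeries ℂ

/-- regularity above order `v` -/
def Reg (v : ℤ) (x : K) : Prop := ∀ i : ℤ, i < v → x.coeff i = 0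

lemma Reg.mono {v w : ℤ} {x : K} (h : Reg v x) (hw : w ≤ v) : Reg w x :=
  fun i hi => h i (lt_of_lt_of_le hi hw)

lemma reg_zero (v : ℤ) : Reg v 0 := fun i _ => rfl

lemma reg_add {v : ℤ} {x y : K} (hx : Reg v x) (hy : Reg v y) : Reg v (x + y) := by
  intro i hi
  rw [HahnSeries.coeff_add, hx i hi, hy i hi, add_zero]

lemma reg_neg {v : ℤ} {x : K} (hx : Reg v x) : Reg v (-x) := by
  intro i hi
  rw [HahnSeries.coeff_neg, hx i hi, neg_zero]

lemma reg_sub {v : ℤ} {x y : K} (hx : Reg v x) (hy : Reg v y) : Reg v (x - y) := by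
  intro i hi
  rw [HahnSeries.coeff_sub, hx i hi, hy i hi, sub_zero]

lemma reg_sum {ι : Type*} {v : ℤ} {s : Finset ι} {f : ι → K}
    (h : ∀ i ∈ s, Reg v (f i)) : Reg v (∑ i ∈ s, f i) := by
  intro i hi
  rw [show ((∑ j ∈ s, f j).coeff i) = ∑ j ∈ s, (f j).coeff i from
    map_sum (HahnSeries.coeff.addMonoidHom i) f s]
  exact Finset.sum_eq_zero fun j hj => h j hj i hi

lemma mul_coeff_reg {a b : ℤ} {x y : K} (hx : Reg a x) (hy : Reg b y) :
    (x * y).coeff (a + b) = x.coeff a * y.coeff b := by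
  classical
  rw [HahnSeries.coeff_mul]
  rw [Finset.sum_eq_single ((a, b) : ℤ × ℤ)]
  · intro p hp hne
    rw [Finset.mem_addAntidiagonal] at hp
    obtain ⟨h1, h2, h3⟩ := hp
    have ha : a ≤ p.1 := by
      by_contra h
      exact h1 (hx p.1 (by omega))
    have hb : b ≤ p.2 := by
      by_contra h
      exact h2 (hy p.2 (by omega))
    exact absurd (Prod.ext (by omega) (by omega)) hne
  · intro h
    rw [Finset.mem_addAntidiagonal] at h
    push_neg at h
    by_cases hxa : x.coeff a = 0
    · rw [hxa, zero_mul]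
    · by_cases hyb : y.coeff b = 0
      · rw [hyb, mul_zero]
      · exact absurd rfl (h hxa hyb)

lemma reg_mul {a b : ℤ} {x y : K} (hx : Reg a x) (hy : Reg b y) : Reg (a + b) (x * y) := by
  intro i hi
  have h1 : Reg (i - b) x := hx.mono (by omega)
  have h2 := mul_coeff_reg h1 hy
  rw [show i - b + b = i by ring] at h2
  rw [h2, hx (i - b) (by omega), zero_mul]

lemma reg_inv {q : ℤ} {x : K} (hx : Reg q x) (hq : x.coeff q ≠ 0) : Reg (-q) x⁻¹ := by
  have hx0 : x ≠ 0 := fun h => hq (by simp [h, HahnSeries.coeff_zero])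
  intro i hi
  by_contra h
  have hne : x⁻¹ ≠ 0 := fun h0 => h (by simp [h0, HahnSeries.coeff_zero])
  have hsupp : x⁻¹.support.Nonempty := HahnSeries.support_nonempty_iff.2 hne
  have hmem : x⁻¹.isWF_support.min hsupp ∈ x⁻¹.support := Set.IsWF.min_mem _ _
  have hmle : x⁻¹.isWF_support.min hsupp ≤ i :=
    Set.IsWF.min_le _ _ (show i ∈ x⁻¹.support from h)
  have hreginv : Reg (x⁻¹.isWF_support.min hsupp) x⁻¹ := by
    intro j hj
    by_contra hj0
    exact (Set.IsWF.not_lt_min _ hsupp (show j ∈ x⁻¹.support from hj0)) hj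
  have hmul := mul_coeff_reg hx hreginv
  rw [mul_inv_cancel₀ hx0] at hmul
  have h1 : (1 : K).coeff (q + x⁻¹.isWF_support.min hsupp) = 0 := by
    rw [HahnSeries.coeff_one, if_neg (by omega)]
  rw [h1] at hmul
  exact hmem (by
    rcases mul_eq_zero.1 hmul.symm with h' | h'
    · exact absurd h' hq
    · exact h')

lemma algK (c : ℂ) : algebraMap ℂ K c = HahnSeries.C c := by
  rw [HahnSeries.algebraMap_apply', PowerSeries.algebraMap_apply, HahnSeries.ofPowerSeries_C]
  norm_num

lemma reg_algebraMap (c : ℂ) : Reg 0 (algebraMap ℂ K c) := by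
  intro i hi
  rw [algK, HahnSeries.C_apply]
  exact HahnSeries.coeff_single_of_ne (by omega)

lemma coeff_zero_algebraMap (c : ℂ) : (algebraMap ℂ K c).coeff 0 = c := by
  rw [algK, HahnSeries.C_apply]
  simp


variable {n : ℕ}

/-- coefficient-wise regularity of a polynomial over Laurent series -/
def PReg (v : ℤ) (P : MvPolynomial (Fin n) K) : Prop := ∀ m : Fin n →₀ ℕ, Reg v (coeff m P)

lemma PReg.mono {v w : ℤ} {P : MvPolynomial (Fin n) K} (h : PReg v P) (hw : w ≤ v) :
    PReg w P := fun m => (h m).mono hw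

lemma preg_mul {v w : ℤ} {P Q : MvPolynomial (Fin n) K} (hP : PReg v P) (hQ : PReg w Q) :
    PReg (v + w) (P * Q) := by
  classical
  intro m
  rw [MvPolynomial.coeff_mul]
  exact reg_sum fun p _ => reg_mul (hP p.1) (hQ p.2)

lemma preg_add {v : ℤ} {P Q : MvPolynomial (Fin n) K} (hP : PReg v P) (hQ : PReg v Q) :
    PReg v (P + Q) := fun m => by
  rw [MvPolynomial.coeff_add]; exact reg_add (hP m) (hQ m)

lemma preg_neg {v : ℤ} {P : MvPolynomial (Fin n) K} (hP : PReg v P) : PReg v (-P) := fun m => by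
  rw [MvPolynomial.coeff_neg]; exact reg_neg (hP m)

lemma preg_sum {ι : Type*} {v : ℤ} {s : Finset ι} {f : ι → MvPolynomial (Fin n) K}
    (h : ∀ i ∈ s, PReg v (f i)) : PReg v (∑ i ∈ s, f i) := fun m => by
  rw [MvPolynomial.coeff_sum]; exact reg_sum fun i hi => h i hi m

lemma preg_zero {v : ℤ} : PReg v (0 : MvPolynomial (Fin n) K) := fun m => by
  rw [MvPolynomial.coeff_zero]; exact reg_zero v

lemma preg_C {v : ℤ} {x : K} (hx : Reg v x) : PReg v (C x : MvPolynomial (Fin n) K) := by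
  intro m
  rw [MvPolynomial.coeff_C]
  split
  · exact hx
  · exact reg_zero v

lemma preg_one : PReg 0 (1 : MvPolynomial (Fin n) K) := by
  rw [show (1 : MvPolynomial (Fin n) K) = C 1 from (map_one C).symm]
  exact preg_C (fun i hi => by rw [HahnSeries.coeff_one, if_neg (by omega)])

lemma preg_pow {P : MvPolynomial (Fin n) K} (hP : PReg 0 P) (s : ℕ) : PReg 0 (P ^ s) := by
  induction s with
  | zero => simpa using preg_one
  | succ s ih => rw [pow_succ]; simpa using preg_mul ih hP

lemma preg_map (p : MvPolynomial (Fin n) ℂ) : PReg 0 (map (algebraMap ℂ K) p) := by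
  intro m
  rw [MvPolynomial.coeff_map]
  exact reg_algebraMap _

lemma preg_natCast (m : ℕ) : PReg 0 ((m : MvPolynomial (Fin n) K)) := by
  rw [show ((m : MvPolynomial (Fin n) K)) = C ((m : K)) from (map_natCast C m).symm]
  refine preg_C ?_
  rw [show ((m : K)) = algebraMap ℂ K (m : ℂ) from (map_natCast (algebraMap ℂ K) m).symm]
  exact reg_algebraMap _

lemma preg_multiset_sum {v : ℤ} {t : Multiset (MvPolynomial (Fin n) K)}
    (h : ∀ x ∈ t, PReg v x) : PReg v t.sum := by
  induction t using Multiset.induction_on with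
  | empty => rw [Multiset.sum_zero]; exact preg_zero
  | cons a t' ih =>
    rw [Multiset.sum_cons]
    exact preg_add (h a (Multiset.mem_cons_self _ _))
      (ih fun x hx => h x (Multiset.mem_cons_of_mem hx))

lemma preg_multiset_prod0 {t : Multiset (MvPolynomial (Fin n) K)}
    (h : ∀ x ∈ t, PReg 0 x) : PReg 0 t.prod := by
  induction t using Multiset.induction_on with
  | empty => rw [Multiset.prod_zero]; exact preg_one
  | cons a t' ih =>
    rw [Multiset.prod_cons]
    have := preg_mul (h a (Multiset.mem_cons_self _ _))
      (ih fun x hx => h x (Multiset.mem_cons_of_mem hx))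
    simpa using this

/-- set `ε = 0` coefficient-wise -/
def pev (P : MvPolynomial (Fin n) K) : MvPolynomial (Fin n) ℂ :=
  ∑ m ∈ P.support, monomial m ((coeff m P).coeff 0)

lemma coeff_pev (P : MvPolynomial (Fin n) K) (μ : Fin n →₀ ℕ) :
    coeff μ (pev P) = (coeff μ P).coeff 0 := by
  classical
  rw [pev, MvPolynomial.coeff_sum]
  simp only [MvPolynomial.coeff_monomial]
  rw [Finset.sum_ite_eq' P.support μ (fun m => (coeff m P).coeff 0)]
  split
  · rfl
  · rename_i h
    rw [MvPolynomial.notMem_support_iff.1 h]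
    rfl

lemma pev_eq_zero {P : MvPolynomial (Fin n) K} (h : PReg 1 P) : pev P = 0 := by
  ext μ
  rw [coeff_pev]
  simpa using h μ 0 (by norm_num)

lemma pev_add (P Q : MvPolynomial (Fin n) K) : pev (P + Q) = pev P + pev Q := by
  ext μ
  simp only [coeff_pev, MvPolynomial.coeff_add, HahnSeries.coeff_add]

lemma pev_sum {ι : Type*} (s : Finset ι) (f : ι → MvPolynomial (Fin n) K) :
    pev (∑ i ∈ s, f i) = ∑ i ∈ s, pev (f i) := by
  classical
  induction s using Finset.induction_on with
  | empty => ext μ; simp [coeff_pev]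
  | @insert a s' ha ih => rw [Finset.sum_insert ha, Finset.sum_insert ha, pev_add, ih]

lemma pev_mul {P Q : MvPolynomial (Fin n) K} (hP : PReg 0 P) (hQ : PReg 0 Q) :
    pev (P * Q) = pev P * pev Q := by
  classical
  ext μ
  rw [coeff_pev, MvPolynomial.coeff_mul, MvPolynomial.coeff_mul]
  rw [show ((∑ p ∈ Finset.HasAntidiagonal.antidiagonal μ, coeff p.1 P * coeff p.2 Q).coeff (0:ℤ))
      = ∑ p ∈ Finset.HasAntidiagonal.antidiagonal μ, (coeff p.1 P * coeff p.2 Q).coeff (0:ℤ) from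
    map_sum (HahnSeries.coeff.addMonoidHom (0:ℤ)) _ _]
  refine Finset.sum_congr rfl fun p _ => ?_
  have := mul_coeff_reg (hP p.1) (hQ p.2)
  rw [add_zero] at this
  rw [this, coeff_pev, coeff_pev]

lemma pev_map (p : MvPolynomial (Fin n) ℂ) : pev (map (algebraMap ℂ K) p) = p := by
  ext μ
  rw [coeff_pev, MvPolynomial.coeff_map, coeff_zero_algebraMap]

lemma pev_homog {P : MvPolynomial (Fin n) K} {s : ℕ} (h : P.IsHomogeneous s) :
    (pev P).IsHomogeneous s := by
  intro μ hμ
  rw [coeff_pev] at hμ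
  exact h (fun h0 => hμ (by rw [h0]; rfl))

/-- the polynomial does not involve variable `i0` -/
def Avoids (i0 : Fin n) (P : MvPolynomial (Fin n) K) : Prop :=
  ∀ μ : Fin n →₀ ℕ, coeff μ P ≠ 0 → μ i0 = 0

lemma avoids_mul {i0 : Fin n} {P Q : MvPolynomial (Fin n) K} (hP : Avoids i0 P)
    (hQ : Avoids i0 Q) : Avoids i0 (P * Q) := by
  classical
  intro μ hμ
  rw [MvPolynomial.coeff_mul] at hμ
  obtain ⟨p, hp, hne⟩ := Finset.exists_ne_zero_of_sum_ne_zero hμ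
  rw [Finset.HasAntidiagonal.mem_antidiagonal] at hp
  have h1 := hP p.1 (fun h => hne (by rw [h, zero_mul]))
  have h2 := hQ p.2 (fun h => hne (by rw [h, mul_zero]))
  rw [← hp]
  simp [Finsupp.add_apply, h1, h2]

lemma avoids_one {i0 : Fin n} : Avoids i0 (1 : MvPolynomial (Fin n) K) := by
  intro μ hμ
  rw [MvPolynomial.coeff_one] at hμ
  have : μ = 0 := by by_contra h; rw [if_neg ?_] at hμ; exact hμ rfl; exact fun hh => h hh.symm
  rw [this]; rfl

lemma avoids_pow {i0 : Fin n} {P : MvPolynomial (Fin n) K} (hP : Avoids i0 P) (s : ℕ) :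
    Avoids i0 (P ^ s) := by
  induction s with
  | zero => simpa using avoids_one
  | succ s ih => rw [pow_succ]; exact avoids_mul ih hP

lemma avoids_C {i0 : Fin n} (x : K) : Avoids i0 (C x : MvPolynomial (Fin n) K) := by
  intro μ hμ
  rw [MvPolynomial.coeff_C] at hμ
  have : μ = 0 := by by_contra h; rw [if_neg ?_] at hμ; exact hμ rfl; exact fun hh => h hh.symm
  rw [this]; rfl

lemma avoids_sum {ι : Type*} {i0 : Fin n} {s : Finset ι} {f : ι → MvPolynomial (Fin n) K}
    (h : ∀ i ∈ s, Avoids i0 (f i)) : Avoids i0 (∑ i ∈ s, f i) := by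
  intro μ hμ
  rw [MvPolynomial.coeff_sum] at hμ
  obtain ⟨p, hp, hne⟩ := Finset.exists_ne_zero_of_sum_ne_zero hμ
  exact h p hp μ hne


lemma finsupp_eq_single_of_forall {μ : Fin n →₀ ℕ} {i0 : Fin n}
    (h : ∀ j, j ≠ i0 → μ j = 0) : μ = Finsupp.single i0 (μ i0) := by
  ext j
  by_cases hj : j = i0
  · subst hj; simp
  · rw [h j hj, Finsupp.single_apply, if_neg (fun hh => hj hh.symm)]

lemma eq_single_of_degree_le {μ : Fin n →₀ ℕ} {i0 : Fin n} (h : μ.degree ≤ μ i0) :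
    μ = Finsupp.single i0 (μ i0) := by
  classical
  refine finsupp_eq_single_of_forall fun j hj => ?_
  by_contra hμj
  have hjs : j ∈ μ.support := Finsupp.mem_support_iff.2 hμj
  have hle : μ i0 ≤ μ.degree := Finsupp.le_degree i0 μ
  have hdeg : μ.degree = μ i0 := le_antisymm h hle
  have hi0mem : i0 ∈ μ.support := by
    by_contra hi0
    have : μ i0 = 0 := Finsupp.notMem_support_iff.1 hi0
    rw [this] at hdeg
    have := (Finsupp.degree_eq_zero_iff μ).1 hdeg
    rw [this] at hμj
    exact hμj rfl
  have hsum : μ.degree = μ i0 + ∑ x ∈ μ.support.erase i0, μ x :=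
    (Finset.add_sum_erase _ _ hi0mem).symm
  have hzero : ∑ x ∈ μ.support.erase i0, μ x = 0 := by omega
  have := Finset.sum_eq_zero_iff.1 hzero j (Finset.mem_erase.2 ⟨hj, hjs⟩)
  exact hμj this

lemma exists_single_of_degree_one {μ : Fin n →₀ ℕ} (h : μ.degree = 1) :
    ∃ i, μ = Finsupp.single i 1 := by
  classical
  have hne : μ ≠ 0 := by
    intro h0; rw [h0, map_zero] at h; exact Nat.zero_ne_one h
  obtain ⟨i, hi⟩ := Finsupp.support_nonempty_iff.2 hne
  have h1 : 1 ≤ μ i := Nat.one_le_iff_ne_zero.2 (Finsupp.mem_support_iff.1 hi)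
  have h2 : μ i ≤ 1 := h ▸ Finsupp.le_degree i μ
  have h3 : μ i = 1 := le_antisymm h2 h1
  refine ⟨i, ?_⟩
  have h4 := eq_single_of_degree_le (i0 := i) (μ := μ) (by omega)
  rwa [h3] at h4

lemma degree_single (i0 : Fin n) (t : ℕ) : (Finsupp.single i0 t).degree = t := by
  classical
  rcases eq_or_ne t 0 with h | h
  · simp [h, Finsupp.degree]
  · rw [Finsupp.degree_apply, Finsupp.support_single_ne_zero _ h, Finset.sum_singleton,
      Finsupp.single_eq_same]

lemma homog_degree {P : MvPolynomial (Fin n) K} {s : ℕ} (h : P.IsHomogeneous s)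
    {μ : Fin n →₀ ℕ} (hμ : coeff μ P ≠ 0) : μ.degree = s := by
  by_contra hd
  exact hμ (h.coeff_eq_zero hd)

lemma homog_degree' {P : MvPolynomial (Fin n) ℂ} {s : ℕ} (h : P.IsHomogeneous s)
    {μ : Fin n →₀ ℕ} (hμ : coeff μ P ≠ 0) : μ.degree = s := by
  by_contra hd
  exact hμ (h.coeff_eq_zero hd)

lemma coeff_pow_single {L : MvPolynomial (Fin n) K} (hL : L.IsHomogeneous 1) (i0 : Fin n) :
    ∀ a : ℕ, coeff (Finsupp.single i0 a) (L ^ a) = (coeff (Finsupp.single i0 1) L) ^ a := by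
  classical
  intro a
  induction a with
  | zero => simp
  | succ a ih =>
    rw [pow_succ, MvPolynomial.coeff_mul]
    rw [Finset.sum_eq_single ((Finsupp.single i0 a, Finsupp.single i0 1) :
        (Fin n →₀ ℕ) × (Fin n →₀ ℕ))]
    · rw [ih, pow_succ]
    · intro p hp hne
      rw [Finset.HasAntidiagonal.mem_antidiagonal] at hp
      by_contra hne0
      have h1 : coeff p.1 (L ^ a) ≠ 0 := fun h => hne0 (by rw [h, zero_mul])
      have h2 : coeff p.2 L ≠ 0 := fun h => hne0 (by rw [h, mul_zero])
      have hd1 : p.1.degree = a := by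
        have := homog_degree (by simpa using hL.pow a) h1; simpa using this
      have hd2 : p.2.degree = 1 := homog_degree hL h2
      have hz : ∀ j, j ≠ i0 → p.1 j = 0 ∧ p.2 j = 0 := by
        intro j hj
        have := DFunLike.congr_fun hp j
        simp only [Finsupp.coe_add, Pi.add_apply] at this
        rw [show ((Finsupp.single i0 (a+1)) j) = 0 from Finsupp.single_eq_of_ne'
          (fun hh => hj hh.symm)] at this
        omega
      have hp2 : p.2 = Finsupp.single i0 (p.2 i0) :=
        finsupp_eq_single_of_forall fun j hj => (hz j hj).2
      have hp1 : p.1 = Finsupp.single i0 (p.1 i0) :=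
        finsupp_eq_single_of_forall fun j hj => (hz j hj).1
      have hsum : p.1 i0 + p.2 i0 = a + 1 := by
        have := DFunLike.congr_fun hp i0
        simp only [Finsupp.coe_add, Pi.add_apply] at this
        rw [show ((Finsupp.single i0 (a+1)) i0) = a + 1 from Finsupp.single_eq_same] at this
        exact this
      have hd2' : p.2 i0 = 1 := by
        rw [hp2] at hd2; rwa [degree_single] at hd2
      have hd1' : p.1 i0 = a := by omega
      exact hne (Prod.ext (by rw [hp1, hd1']) (by rw [hp2, hd2']))
    · intro hnot
      exfalso
      apply hnot
      rw [Finset.HasAntidiagonal.mem_antidiagonal, ← Finsupp.single_add]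

lemma coeff_mul_avoids_top {L T : MvPolynomial (Fin n) K} (hL : L.IsHomogeneous 1) {i0 : Fin n}
    (hT : Avoids i0 T) (a : ℕ) {μ : Fin n →₀ ℕ} (hμ : μ i0 = 0) :
    coeff (μ + Finsupp.single i0 a) (L ^ a * T) =
      (coeff (Finsupp.single i0 1) L) ^ a * coeff μ T := by
  classical
  rw [MvPolynomial.coeff_mul]
  rw [Finset.sum_eq_single ((Finsupp.single i0 a, μ) : (Fin n →₀ ℕ) × (Fin n →₀ ℕ))]
  · rw [coeff_pow_single hL]
  · intro p hp hne
    rw [Finset.HasAntidiagonal.mem_antidiagonal] at hp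
    by_contra hne0
    have h1 : coeff p.1 (L ^ a) ≠ 0 := fun h => hne0 (by rw [h, zero_mul])
    have h2 : coeff p.2 T ≠ 0 := fun h => hne0 (by rw [h, mul_zero])
    have hp2i0 : p.2 i0 = 0 := hT p.2 h2
    have hd1 : p.1.degree = a := by
      have := homog_degree (by simpa using hL.pow a) h1; simpa using this
    have hsumi0 : p.1 i0 + p.2 i0 = μ i0 + a := by
      have := DFunLike.congr_fun hp i0
      simpa [Finsupp.add_apply] using this
    have hp1i0 : p.1 i0 = a := by omega
    have hp1 : p.1 = Finsupp.single i0 a := by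
      rw [← hp1i0]; exact eq_single_of_degree_le (by omega)
    have hp2 : p.2 = μ := by
      have : p.1 + p.2 = Finsupp.single i0 a + μ := by
        rw [hp, add_comm]
      rw [hp1] at this
      exact add_left_cancel this
    exact hne (Prod.ext hp1 hp2)
  · intro hnot
    exfalso
    exact hnot (Finset.HasAntidiagonal.mem_antidiagonal.2 (add_comm _ _))

lemma coeff_mul_avoids_zero {P T : MvPolynomial (Fin n) K} {a : ℕ} (hP : P.IsHomogeneous a)
    {i0 : Fin n} (hT : Avoids i0 T) {ν : Fin n →₀ ℕ} (hν : a < ν i0) :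
    coeff ν (P * T) = 0 := by
  classical
  rw [MvPolynomial.coeff_mul]
  refine Finset.sum_eq_zero fun p hp => ?_
  rw [Finset.HasAntidiagonal.mem_antidiagonal] at hp
  by_contra hne0
  have h1 : coeff p.1 P ≠ 0 := fun h => hne0 (by rw [h, zero_mul])
  have h2 : coeff p.2 T ≠ 0 := fun h => hne0 (by rw [h, mul_zero])
  have hp2i0 : p.2 i0 = 0 := hT p.2 h2
  have hd1 : p.1.degree = a := homog_degree hP h1
  have hsumi0 : p.1 i0 + p.2 i0 = ν i0 := by
    have := DFunLike.congr_fun hp i0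
    simpa [Finsupp.add_apply] using this
  have := Finsupp.le_degree i0 p.1
  omega


lemma vanish_T {n r d j : ℕ} (hrj : r ≤ j) (hjd : j ≤ d)
    (aa : Fin r → K) (ss : Fin r → MvPolynomial (Fin n) K)
    (hss : ∀ k, PReg 1 (ss k))
    (hreg : ∀ j', j' ≤ d → PReg 0 (∑ k, C (aa k) ^ d * ss k ^ j')) :
    PReg 1 (∑ k, C (aa k) ^ d * ss k ^ j) := by
  classical
  set S : Multiset (MvPolynomial (Fin n) K) :=
    Finset.univ.val.map (fun k => - ss k) with hSdef
  have hcard : Multiset.card S = r := by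
    rw [hSdef, Multiset.card_map]
    exact Finset.card_fin r
  have hmemS : ∀ x ∈ S, PReg 1 x := by
    intro x hx
    rw [hSdef, Multiset.mem_map] at hx
    obtain ⟨k, _, hk⟩ := hx
    rw [← hk]
    exact preg_neg (hss k)
  have hesymm : ∀ i, 1 ≤ i → PReg 1 (S.esymm i) := by
    intro i hi1
    rw [Multiset.esymm]
    refine preg_multiset_sum ?_
    intro x hx
    rw [Multiset.mem_map] at hx
    obtain ⟨t, ht, hxt⟩ := hx
    rw [Multiset.mem_powersetCard] at ht
    obtain ⟨hts, htc⟩ := ht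
    obtain ⟨el, hel⟩ := Multiset.card_pos_iff_exists_mem.1 (by omega : 0 < Multiset.card t)
    obtain ⟨t', ht'⟩ := Multiset.exists_cons_of_mem hel
    rw [← hxt, ht', Multiset.prod_cons]
    have h1 : PReg 1 el := hmemS el (Multiset.mem_of_le hts hel)
    have h2 : PReg 0 t'.prod := preg_multiset_prod0 (fun x hx =>
      (hmemS x (Multiset.mem_of_le hts (ht' ▸ Multiset.mem_cons_of_mem hx))).mono
        (by norm_num))
    have h3 := preg_mul h1 h2
    rw [add_zero] at h3
    exact h3
  have hvan : ∀ k, ∑ i ∈ Finset.range (r + 1), S.esymm i * (ss k) ^ (r - i) = 0 := by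
    intro k
    have h1 := Multiset.prod_X_add_C_eq_sum_esymm S
    have h2 := congrArg (Polynomial.eval (ss k)) h1
    rw [Polynomial.eval_multiset_prod, Multiset.map_map] at h2
    have hzero : ((S.map (fun t => Polynomial.eval (ss k) (Polynomial.X + Polynomial.C t))).prod)
        = 0 := by
      refine Multiset.prod_eq_zero ?_
      rw [Multiset.mem_map]
      refine ⟨- ss k, ?_, by
        rw [Polynomial.eval_add, Polynomial.eval_X, Polynomial.eval_C, add_neg_cancel]⟩
      rw [hSdef, Multiset.mem_map]
      exact ⟨k, Finset.mem_univ_val _, rfl⟩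
    rw [show ((fun t => Polynomial.eval (ss k) t) ∘ (fun u => Polynomial.X + Polynomial.C u))
      = (fun t => Polynomial.eval (ss k) (Polynomial.X + Polynomial.C t)) from rfl] at h2
    rw [hzero] at h2
    rw [Polynomial.eval_finset_sum] at h2
    simp only [Polynomial.eval_mul, Polynomial.eval_pow, Polynomial.eval_C,
      Polynomial.eval_X, hcard] at h2
    exact h2.symm
  have hk : ∀ k, ∑ i ∈ Finset.range (r + 1),
      S.esymm i * (C (aa k) ^ d * ss k ^ (j - i)) = 0 := by
    intro k
    have h1 := congrArg (fun x => C (aa k) ^ d * ss k ^ (j - r) * x) (hvan k)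
    simp only [mul_zero] at h1
    rw [Finset.mul_sum] at h1
    calc ∑ i ∈ Finset.range (r + 1), S.esymm i * (C (aa k) ^ d * ss k ^ (j - i))
        = ∑ i ∈ Finset.range (r + 1),
            C (aa k) ^ d * ss k ^ (j - r) * (S.esymm i * ss k ^ (r - i)) := by
          refine Finset.sum_congr rfl (fun i hi => ?_)
          have hir : i ≤ r := by
            have := Finset.mem_range.1 hi; omega
          rw [show j - i = (j - r) + (r - i) from by omega, pow_add]
          ring
      _ = 0 := h1
  have hsum0 : ∑ i ∈ Finset.range (r + 1),
      S.esymm i * (∑ k, C (aa k) ^ d * ss k ^ (j - i)) = 0 := by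
    calc ∑ i ∈ Finset.range (r + 1), S.esymm i * (∑ k, C (aa k) ^ d * ss k ^ (j - i))
        = ∑ i ∈ Finset.range (r + 1), ∑ k, S.esymm i * (C (aa k) ^ d * ss k ^ (j - i)) :=
          Finset.sum_congr rfl (fun i _ => Finset.mul_sum _ _ _)
      _ = ∑ k, ∑ i ∈ Finset.range (r + 1), S.esymm i * (C (aa k) ^ d * ss k ^ (j - i)) :=
          Finset.sum_comm
      _ = ∑ _k : Fin r, (0 : MvPolynomial (Fin n) K) :=
          Finset.sum_congr rfl (fun k _ => hk k)
      _ = 0 := Finset.sum_const_zero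
  have hesymm0 : S.esymm 0 = 1 := by simp [Multiset.esymm]
  have hpeel : (∑ k, C (aa k) ^ d * ss k ^ j) + ∑ i ∈ Finset.Ico 1 (r + 1),
      S.esymm i * (∑ k, C (aa k) ^ d * ss k ^ (j - i)) = 0 := by
    rw [← hsum0, Finset.range_eq_Ico,
      Finset.sum_eq_sum_Ico_succ_bot (by omega : 0 < r + 1)]
    rw [hesymm0, one_mul, Nat.sub_zero, zero_add]
  have hTj : (∑ k, C (aa k) ^ d * ss k ^ j) = - ∑ i ∈ Finset.Ico 1 (r + 1),
      S.esymm i * (∑ k, C (aa k) ^ d * ss k ^ (j - i)) :=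
    eq_neg_of_add_eq_zero_left hpeel
  rw [hTj]
  refine preg_neg (preg_sum (fun i hi => ?_))
  rw [Finset.mem_Ico] at hi
  have h5 := preg_mul (hesymm i hi.1) (hreg (j - i) (by omega))
  rw [add_zero] at h5
  exact h5

end

end Stmt6Helper

set_option maxHeartbeats 2000000 in
open Stmt6Helper in
/-- If `f ∈ ℂ[x]_d` has a local border Waring rank decomposition with `r` summands
based at the nonzero linear form `ℓbase` and `d ≥ r − 1`, then
`f = ℓbase^(d−r+1) · g` for some homogeneous `g` of degree `r − 1`. -/
theorem stmt6 (n d r : ℕ) (hd : r - 1 ≤ d) (f : MvPolynomial (Fin n) ℂ)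
    (hf : f.IsHomogeneous d)
    (ℓbase : MvPolynomial (Fin n) ℂ) (hbase : ℓbase.IsHomogeneous 1) (hbase0 : ℓbase ≠ 0)
    (ℓ : Fin r → MvPolynomial (Fin n) (LaurentSeries ℂ))
    (hhom : ∀ k, (ℓ k).IsHomogeneous 1)
    (hconv : ConvergesTo n (∑ k, ℓ k ^ d) f)
    (hlocal : ∀ k, ∃ (q : ℤ) (c : ℂ), c ≠ 0 ∧ LowestTermIs n (ℓ k) q (c • ℓbase)) :
    ∃ g : MvPolynomial (Fin n) ℂ, g.IsHomogeneous (r - 1) ∧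
      f = ℓbase ^ (d + 1 - r) * g := by
  classical
  rcases Nat.eq_zero_or_pos r with hr0 | hrpos
  · subst hr0
    refine ⟨0, isHomogeneous_zero _ _ _, ?_⟩
    have hf0 : f = 0 := by
      apply MvPolynomial.ext
      intro μ
      have h2 := (hconv μ).2
      simp only [Finset.univ_eq_empty, Finset.sum_empty, MvPolynomial.coeff_zero] at h2
      rw [MvPolynomial.coeff_zero]
      exact h2.symm
    rw [hf0, mul_zero]
  have hrd1 : r ≤ d + 1 := by omega
  -- pick the distinguished variable i0
  obtain ⟨mb, hmb⟩ : ∃ mb, coeff mb ℓbase ≠ 0 := by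
    by_contra h
    push_neg at h
    exact hbase0 (MvPolynomial.ext _ _ (fun μ => by rw [h μ, MvPolynomial.coeff_zero]))
  obtain ⟨i0, hi0⟩ := exists_single_of_degree_one (homog_degree' hbase hmb)
  set b : ℂ := coeff (Finsupp.single i0 1) ℓbase with hbdef
  have hbne : b ≠ 0 := by rw [hbdef]; rw [hi0] at hmb; exact hmb
  set bK : K := algebraMap ℂ K b with hbK
  have hbKne : bK ≠ 0 := by
    rw [hbK, map_ne_zero]; exact hbne
  set L : MvPolynomial (Fin n) K := map (algebraMap ℂ K) ℓbase with hLdef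
  have hLhom : L.IsHomogeneous 1 := hbase.map _
  have hLcoeff : ∀ μ, coeff μ L = algebraMap ℂ K (coeff μ ℓbase) := fun μ => by
    rw [hLdef, MvPolynomial.coeff_map]
  have hLb : coeff (Finsupp.single i0 1) L = bK := by rw [hLcoeff, ← hbdef, ← hbK]
  -- local data
  choose q c hc hLT using hlocal
  have hlow : ∀ k μ, ∀ i : ℤ, i < q k → (coeff μ (ℓ k)).coeff i = 0 := fun k => (hLT k).2.1
  have hval : ∀ k μ, (coeff μ (ℓ k)).coeff (q k) = c k * coeff μ ℓbase := by
    intro k μ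
    rw [(hLT k).2.2 μ, MvPolynomial.coeff_smul]
    rfl
  set a : Fin r → K := fun k => coeff (Finsupp.single i0 1) (ℓ k) * bK⁻¹ with hadef
  have hbKinv : Reg 0 bK⁻¹ := by
    rw [hbK, ← map_inv₀]
    exact reg_algebraMap _
  have hbKinv0 : bK⁻¹.coeff 0 = b⁻¹ := by rw [hbK, ← map_inv₀, coeff_zero_algebraMap]
  have haReg : ∀ k, Reg (q k) (a k) := by
    intro k
    have h1 := reg_mul (a := q k) (b := 0)
      (fun i hi => hlow k (Finsupp.single i0 1) i hi) hbKinv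
    rw [add_zero] at h1
    exact h1
  have haCoeff : ∀ k, (a k).coeff (q k) = c k := by
    intro k
    have h1 := mul_coeff_reg (a := q k) (b := 0)
      (fun i hi => hlow k (Finsupp.single i0 1) i hi) hbKinv
    rw [add_zero] at h1
    show (coeff (Finsupp.single i0 1) (ℓ k) * bK⁻¹).coeff (q k) = c k
    rw [h1, hval, hbKinv0, ← hbdef]
    field_simp
  have haNe : ∀ k, a k ≠ 0 := by
    intro k h0
    apply hc k
    rw [← haCoeff k, h0]
    rfl
  set m : Fin r → MvPolynomial (Fin n) K := fun k => ℓ k - C (a k) * L with hmdef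
  have hdecomp : ∀ k, ℓ k = m k + C (a k) * L := fun k => by rw [hmdef]; ring
  have hmhom : ∀ k, (m k).IsHomogeneous 1 := by
    intro k
    refine (hhom k).sub ?_
    simpa using (isHomogeneous_C _ (a k)).mul hLhom
  have hmcoeff : ∀ k μ, coeff μ (m k) = coeff μ (ℓ k) - a k * algebraMap ℂ K (coeff μ ℓbase) := by
    intro k μ
    rw [hmdef]
    simp only [MvPolynomial.coeff_sub, MvPolynomial.coeff_C_mul]
    rw [hLcoeff]
  have hmi0 : ∀ k, coeff (Finsupp.single i0 1) (m k) = 0 := by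
    intro k
    rw [hmcoeff, ← hbdef, ← hbK]
    show coeff (Finsupp.single i0 1) (ℓ k) - coeff (Finsupp.single i0 1) (ℓ k) * bK⁻¹ * bK = 0
    field_simp
    simp
  have hmavoid : ∀ k, Avoids i0 (m k) := by
    intro k μ hμ
    obtain ⟨i, hi⟩ := exists_single_of_degree_one (homog_degree (hmhom k) hμ)
    by_cases hii : i = i0
    · subst hii; rw [hi] at hμ; exact absurd (hmi0 k) hμ
    · rw [hi]; exact Finsupp.single_eq_of_ne' hii
  have hmReg : ∀ k, PReg (q k + 1) (m k) := by
    intro k μ i hi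
    rw [hmcoeff]
    rcases (by omega : i < q k ∨ i = q k) with h | h
    · rw [HahnSeries.coeff_sub, hlow k μ i h,
        (reg_mul (haReg k) (reg_algebraMap (coeff μ ℓbase))) i (by omega), sub_zero]
    · subst h
      have h2 := mul_coeff_reg (haReg k) (reg_algebraMap (coeff μ ℓbase))
      rw [add_zero, haCoeff, coeff_zero_algebraMap] at h2
      rw [HahnSeries.coeff_sub, h2, hval, sub_self]
  set s : Fin r → MvPolynomial (Fin n) K := fun k => C (a k)⁻¹ * m k with hsdef
  have hCas : ∀ k, C (a k) * s k = m k := by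
    intro k
    show C (a k) * (C (a k)⁻¹ * m k) = m k
    rw [← mul_assoc, ← C_mul, mul_inv_cancel₀ (haNe k), C_1, one_mul]
  have hsReg : ∀ k, PReg 1 (s k) := by
    intro k
    have h1 : PReg (-(q k)) (C (a k)⁻¹ : MvPolynomial (Fin n) K) :=
      preg_C (reg_inv (haReg k) (by rw [haCoeff]; exact hc k))
    have h2 := preg_mul h1 (hmReg k)
    rw [show -(q k) + (q k + 1) = 1 by ring] at h2
    exact h2
  set T : ℕ → MvPolynomial (Fin n) K := fun j => ∑ k, C (a k) ^ (d - j) * m k ^ j with hTdef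
  have hThom : ∀ j, (T j).IsHomogeneous j := by
    intro j
    refine IsHomogeneous.sum _ _ _ (fun k _ => ?_)
    have h1 : (C (a k) ^ (d - j) : MvPolynomial (Fin n) K).IsHomogeneous 0 := by
      simpa using (isHomogeneous_C _ (a k)).pow (d - j)
    have h2 : ((m k) ^ j).IsHomogeneous j := by simpa using (hmhom k).pow j
    simpa using h1.mul h2
  have hTavoid : ∀ j, Avoids i0 (T j) :=
    fun j => avoids_sum (fun k _ =>
      avoids_mul (avoids_pow (avoids_C _) _) (avoids_pow (hmavoid k) _))
  -- binomial expansion of the sum of powers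
  have hFexp : (∑ k, ℓ k ^ d) = ∑ j ∈ Finset.range (d + 1),
      (d.choose j : MvPolynomial (Fin n) K) * (L ^ (d - j) * T j) := by
    calc (∑ k, ℓ k ^ d)
        = ∑ k, ∑ j ∈ Finset.range (d + 1),
            m k ^ j * (C (a k) * L) ^ (d - j) * (d.choose j : MvPolynomial (Fin n) K) :=
          Finset.sum_congr rfl (fun k _ => by rw [hdecomp k]; exact add_pow _ _ d)
      _ = ∑ j ∈ Finset.range (d + 1), ∑ k,
            m k ^ j * (C (a k) * L) ^ (d - j) * (d.choose j : MvPolynomial (Fin n) K) :=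
          Finset.sum_comm
      _ = ∑ j ∈ Finset.range (d + 1),
            (d.choose j : MvPolynomial (Fin n) K) * (L ^ (d - j) * T j) := by
          refine Finset.sum_congr rfl (fun j _ => ?_)
          show _ = _ * (_ * (∑ k, C (a k) ^ (d - j) * m k ^ j))
          rw [Finset.mul_sum, Finset.mul_sum]
          refine Finset.sum_congr rfl (fun k _ => ?_)
          rw [mul_pow]
          ring
  -- Stage 1 : each T j is regular
  have hStage1 : ∀ j, j ≤ d → PReg 0 (T j) := by
    intro j
    induction j using Nat.strong_induction_on with
    | _ j IH =>
    intro hjd μ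
    by_cases hμ0 : μ i0 = 0
    swap
    · have hz : coeff μ (T j) = 0 := by
        by_contra h
        exact hμ0 (hTavoid j μ h)
      rw [hz]; exact reg_zero 0
    · have hCnat : ∀ (j' : ℕ), ((d.choose j' : ℕ) : MvPolynomial (Fin n) K)
          = C ((d.choose j' : K)) :=
        fun j' => (map_natCast (C : K →+* MvPolynomial (Fin n) K) _).symm
      set ν : Fin n →₀ ℕ := μ + Finsupp.single i0 (d - j) with hνdef
      have hνi0 : ν i0 = d - j := by
        rw [hνdef]
        simp [Finsupp.add_apply, hμ0]
      have hkey : coeff ν (∑ k, ℓ k ^ d)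
          = coeff ν ((d.choose j : MvPolynomial (Fin n) K) * (L ^ (d - j) * T j))
            + ∑ j' ∈ (Finset.range (d + 1)).erase j,
              coeff ν ((d.choose j' : MvPolynomial (Fin n) K) * (L ^ (d - j') * T j')) := by
        conv_lhs => rw [hFexp]
        rw [MvPolynomial.coeff_sum]
        exact (Finset.add_sum_erase _ _ (Finset.mem_range.2 (by omega : j < d + 1))).symm
      have hmain : coeff ν ((d.choose j : MvPolynomial (Fin n) K) * (L ^ (d - j) * T j)) =
          (d.choose j : K) * (bK ^ (d - j) * coeff μ (T j)) := by
        rw [hCnat j, MvPolynomial.coeff_C_mul, hνdef,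
          coeff_mul_avoids_top hLhom (hTavoid j) (d - j) hμ0, hLb]
      have hrest : ∀ j' ∈ (Finset.range (d + 1)).erase j,
          Reg 0 (coeff ν ((d.choose j' : MvPolynomial (Fin n) K) * (L ^ (d - j') * T j'))) := by
        intro j' hj'
        have hj'ne : j' ≠ j := (Finset.mem_erase.1 hj').1
        have hj'd : j' < d + 1 := Finset.mem_range.1 (Finset.mem_erase.1 hj').2
        rcases lt_or_gt_of_ne hj'ne with h | h
        · have hP : PReg 0 ((d.choose j' : MvPolynomial (Fin n) K) * (L ^ (d - j') * T j')) := by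
            have h3 := preg_mul (preg_natCast (d.choose j'))
              (preg_mul (preg_pow (preg_map ℓbase) (d - j')) (IH j' h (by omega)))
            rw [hLdef]
            simpa using h3
          exact hP ν
        · have hz : coeff ν (L ^ (d - j') * T j') = 0 := by
            refine coeff_mul_avoids_zero (a := d - j') ?_ (hTavoid j') ?_
            · simpa using hLhom.pow (d - j')
            · rw [hνi0]; omega
          rw [hCnat j', MvPolynomial.coeff_C_mul, hz, mul_zero]
          exact reg_zero 0
      have hbKpow : bK ^ (d - j) = algebraMap ℂ K (b ^ (d - j)) := by rw [hbK, map_pow]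
      have hcK : ((d.choose j : K)) = algebraMap ℂ K ((d.choose j : ℂ)) :=
        (map_natCast (algebraMap ℂ K) _).symm
      have hene : algebraMap ℂ K ((d.choose j : ℂ) * b ^ (d - j)) ≠ 0 := by
        rw [map_ne_zero]
        exact mul_ne_zero (Nat.cast_ne_zero.2 (Nat.choose_pos (by omega)).ne')
          (pow_ne_zero _ hbne)
      have heq : coeff ν (∑ k, ℓ k ^ d) -
          (∑ j' ∈ (Finset.range (d + 1)).erase j,
            coeff ν ((d.choose j' : MvPolynomial (Fin n) K) * (L ^ (d - j') * T j')))
          = algebraMap ℂ K ((d.choose j : ℂ) * b ^ (d - j)) * coeff μ (T j) := by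
        rw [hkey, hmain, map_mul, ← hcK, ← hbKpow]
        ring
      have hfinal : coeff μ (T j) = (algebraMap ℂ K ((d.choose j : ℂ) * b ^ (d - j)))⁻¹ *
          (coeff ν (∑ k, ℓ k ^ d) -
          (∑ j' ∈ (Finset.range (d + 1)).erase j,
            coeff ν ((d.choose j' : MvPolynomial (Fin n) K) * (L ^ (d - j') * T j')))) := by
        rw [heq, inv_mul_cancel_left₀ hene]
      rw [hfinal, ← map_inv₀]
      have hreg1 : Reg 0 (coeff ν (∑ k, ℓ k ^ d)) := fun i hi => (hconv ν).1 i hi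
      have hreg2 := reg_sum hrest
      have h4 := reg_mul (reg_algebraMap (((d.choose j : ℂ) * b ^ (d - j)))⁻¹)
        (reg_sub hreg1 hreg2)
      rw [add_zero] at h4
      exact h4
  -- rewrite T via s
  have hTs : ∀ j, j ≤ d → T j = ∑ k, C (a k) ^ d * s k ^ j := by
    intro j hj
    show (∑ k : Fin r, C (a k) ^ (d - j) * m k ^ j) = ∑ k : Fin r, C (a k) ^ d * s k ^ j
    refine Finset.sum_congr rfl (fun k _ => ?_)
    rw [← hCas k, mul_pow, ← mul_assoc, ← pow_add, Nat.sub_add_cancel hj]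
  -- Stage 2 : T j vanishes at ε = 0 for j ≥ r
  have hStage2 : ∀ j, r ≤ j → j ≤ d → PReg 1 (T j) := by
    intro j hrj hjd
    rw [hTs j hjd]
    refine vanish_T hrj hjd a s hsReg (fun j' hj' => ?_)
    rw [← hTs j' hj']
    exact hStage1 j' hj'
  -- final assembly
  have hpevF : pev (∑ k, ℓ k ^ d) = f := by
    apply MvPolynomial.ext
    intro μ
    rw [coeff_pev]
    exact (hconv μ).2
  have hfsum : f = ∑ j ∈ Finset.range (d + 1),
      (d.choose j : MvPolynomial (Fin n) ℂ) * (ℓbase ^ (d - j) * pev (T j)) := by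
    rw [← hpevF, hFexp, pev_sum]
    refine Finset.sum_congr rfl (fun j hj => ?_)
    have hjd : j ≤ d := by
      have := Finset.mem_range.1 hj; omega
    have h1 : PReg 0 (L ^ (d - j)) := by
      rw [hLdef]; exact preg_pow (preg_map ℓbase) _
    have h2 : PReg 0 (T j) := hStage1 j hjd
    have h12 := preg_mul h1 h2
    rw [add_zero] at h12
    rw [pev_mul (preg_natCast _) h12, pev_mul h1 h2]
    congr 1
    · rw [show ((d.choose j : MvPolynomial (Fin n) K)) =
        map (algebraMap ℂ K) ((d.choose j : MvPolynomial (Fin n) ℂ)) from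
        (map_natCast (MvPolynomial.map (algebraMap ℂ K)) _).symm, pev_map]
    · congr 1
      rw [hLdef, show ((map (algebraMap ℂ K) ℓbase) ^ (d - j)) =
        map (algebraMap ℂ K) (ℓbase ^ (d - j)) from
        (map_pow (MvPolynomial.map (algebraMap ℂ K)) _ _).symm, pev_map]
  refine ⟨∑ j ∈ Finset.range r,
      (d.choose j : MvPolynomial (Fin n) ℂ) * (ℓbase ^ (r - 1 - j) * pev (T j)), ?_, ?_⟩
  · refine IsHomogeneous.sum _ _ _ (fun j hj => ?_)
    have hjr : j < r := Finset.mem_range.1 hj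
    have h0 : ((d.choose j : MvPolynomial (Fin n) ℂ)).IsHomogeneous 0 := by
      rw [show ((d.choose j : MvPolynomial (Fin n) ℂ)) = C ((d.choose j : ℂ)) from
        (map_natCast (C : ℂ →+* MvPolynomial (Fin n) ℂ) _).symm]
      exact isHomogeneous_C _ _
    have h1 : (ℓbase ^ (r - 1 - j)).IsHomogeneous (r - 1 - j) := by
      simpa using hbase.pow _
    have h2 : (pev (T j)).IsHomogeneous j := pev_homog (hThom j)
    have h3 := h0.mul (h1.mul h2)
    rw [show 0 + ((r - 1 - j) + j) = r - 1 from by omega] at h3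
    exact h3
  · rw [hfsum, Finset.mul_sum]
    rw [Finset.range_eq_Ico, ← Finset.sum_Ico_consecutive _ (Nat.zero_le r)
      (by omega : r ≤ d + 1)]
    have hzero : ∑ j ∈ Finset.Ico r (d + 1),
        (d.choose j : MvPolynomial (Fin n) ℂ) * (ℓbase ^ (d - j) * pev (T j)) = 0 := by
      refine Finset.sum_eq_zero (fun j hj => ?_)
      rw [Finset.mem_Ico] at hj
      rw [pev_eq_zero (hStage2 j hj.1 (by omega)), mul_zero, mul_zero]
    rw [hzero, add_zero, ← Finset.range_eq_Ico]
    refine Finset.sum_congr rfl (fun j hj => ?_)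
    have hjr : j < r := Finset.mem_range.1 hj
    rw [show d - j = (d + 1 - r) + (r - 1 - j) from by omega, pow_add]
    ring
end

section
/- Let ℓ_1,…,ℓ_m ∈ ℂ[x_1,…,x_n]_1 be nonzero linear forms such that ℓ_i is not proportional to ℓ_j whenever i ≠ j, let r_1,…,r_m ≥ 1 be integers, and let g_1,…,g_m be homogeneous polynomials with deg g_k = r_k − 1. If ∑_{k=1}^m ℓ_k^{d−r_k+1} g_k = 0 and d ≥ r_1 + … + r_m − 1, then g_k = 0 for all k. -/
open MvPolynomial

lemma deg_one_single {σ : Type*} (m : σ →₀ ℕ) (h : m.degree = 1) :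
    ∃ j, m = Finsupp.single j 1 := by
  classical
  have hm : m ≠ 0 := by
    intro h0; rw [h0, map_zero] at h; omega
  obtain ⟨j, hj⟩ := Finsupp.ne_iff.mp hm
  simp only [Finsupp.coe_zero, Pi.zero_apply] at hj
  refine ⟨j, ?_⟩
  have hjs : j ∈ m.support := Finsupp.mem_support_iff.mpr hj
  have hle : m j ≤ m.degree := Finsupp.le_degree j m
  ext k
  by_cases hk : k = j
  · subst hk
    simp only [Finsupp.single_eq_same]
    omega
  · simp only [Finsupp.single_eq_of_ne' (Ne.symm hk)]
    by_contra hne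
    have hks : k ∈ m.support := Finsupp.mem_support_iff.mpr hne
    have : m j + m k ≤ m.degree := by
      rw [Finsupp.degree_apply]
      have := Finset.add_sum_erase _ m hjs
      have hks' : k ∈ m.support.erase j := Finset.mem_erase.mpr ⟨hk, hks⟩
      have h2 : m k ≤ ∑ i ∈ m.support.erase j, m i := Finset.single_le_sum (fun i _ => Nat.zero_le _) hks'
      omega
    omega

lemma linform_eq {n : ℕ} (ℓ : MvPolynomial (Fin n) ℂ) (h : ℓ.IsHomogeneous 1) :
    ℓ = ∑ j, C (coeff (Finsupp.single j 1) ℓ) * X j := by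
  ext m
  rw [coeff_sum]
  simp only [coeff_C_mul, coeff_X']
  by_cases hm : m.degree = 1
  · obtain ⟨j0, rfl⟩ := deg_one_single m hm
    rw [Finset.sum_eq_single j0]
    · simp
    · intro b _ hb
      rw [if_neg, mul_zero]
      intro hbe
      exact hb (Finsupp.single_left_injective one_ne_zero hbe)
    · simp
  · rw [h.coeff_eq_zero hm]
    rw [Finset.sum_eq_zero]
    intro j _
    rw [if_neg, mul_zero]
    intro he
    rw [← he] at hm
    apply hm
    rw [Finsupp.degree_apply, Finsupp.support_single_ne_zero _ one_ne_zero, Finset.sum_singleton,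
      Finsupp.single_eq_same]

lemma exists_perp {n : ℕ} (a c : Fin n → ℂ) (ha : a ≠ 0) (hc : ∀ z : ℂ, c ≠ z • a) :
    ∃ u : Fin n → ℂ, (∑ j, a j * u j) = 0 ∧ (∑ j, c j * u j) ≠ 0 := by
  by_contra h
  push_neg at h
  obtain ⟨j0, hj0⟩ : ∃ j0, a j0 ≠ 0 := by
    by_contra h0; push_neg at h0; exact ha (funext fun j => h0 j)
  set u0 : Fin n → ℂ := fun j => if j = j0 then (a j0)⁻¹ else 0 with hu0
  have hdot : ∀ b : Fin n → ℂ, (∑ j, b j * u0 j) = b j0 * (a j0)⁻¹ := by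
    intro b
    rw [Finset.sum_eq_single j0]
    · simp [hu0]
    · intro b' _ hb'; simp [hu0, hb']
    · simp
  set z : ℂ := c j0 * (a j0)⁻¹ with hz
  apply hc z
  funext k
  set w : Fin n → ℂ := fun j => (if j = k then 1 else 0) - a k * u0 j with hwdef
  have hsplit : ∀ b : Fin n → ℂ, (∑ j, b j * w j) = b k - a k * (b j0 * (a j0)⁻¹) := by
    intro b
    have : ∀ j, b j * w j = b j * (if j = k then 1 else 0) - a k * (b j * u0 j) := by
      intro j; simp only [hwdef]; ring
    simp only [this, Finset.sum_sub_distrib, ← Finset.mul_sum, hdot]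
    congr 1
    rw [Finset.sum_eq_single k (fun b' _ hb' => by simp [hb']) (by simp)]
    simp
  have hw : (∑ j, a j * w j) = 0 := by
    rw [hsplit]; field_simp; simp
  have hcw := h _ hw
  rw [hsplit] at hcw
  have : c k = z * a k := by
    rw [hz]; field_simp at hcw ⊢; linear_combination hcw
  simpa [Pi.smul_apply, smul_eq_mul] using this

lemma avoid {n : ℕ} {ι : Type*} [DecidableEq ι] (a : Fin n → ℂ) (t : Finset ι)
    (c : ι → Fin n → ℂ)
    (hc : ∀ i ∈ t, ∃ u : Fin n → ℂ, (∑ j, a j * u j) = 0 ∧ (∑ j, c i j * u j) ≠ 0) :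
    ∃ v : Fin n → ℂ, (∑ j, a j * v j) = 0 ∧ ∀ i ∈ t, (∑ j, c i j * v j) ≠ 0 := by
  classical
  induction t using Finset.induction with
  | empty => exact ⟨0, by simp, by simp⟩
  | @insert b t hb ih =>
    obtain ⟨v, hv0, hv⟩ := ih (fun i hi => hc i (Finset.mem_insert_of_mem hi))
    obtain ⟨u, hu0, hub⟩ := hc b (Finset.mem_insert_self b t)
    set B : Finset ℂ := (insert b t).image (fun i => -(∑ j, c i j * v j) / (∑ j, c i j * u j))
      with hB
    obtain ⟨z, hzB⟩ := Infinite.exists_notMem_finset B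
    refine ⟨v + z • u, ?_, ?_⟩
    · have hexp : (∑ j, a j * (v + z • u) j) = (∑ j, a j * v j) + z * (∑ j, a j * u j) := by
        simp only [Pi.add_apply, Pi.smul_apply, smul_eq_mul, mul_add, Finset.sum_add_distrib,
          Finset.mul_sum]
        congr 1
        exact Finset.sum_congr rfl fun j _ => by ring
      rw [hexp, hv0, hu0]; ring
    · intro i hi
      have hexp : (∑ j, c i j * (v + z • u) j) = (∑ j, c i j * v j) + z * (∑ j, c i j * u j) := by
        simp only [Pi.add_apply, Pi.smul_apply, smul_eq_mul, mul_add, Finset.sum_add_distrib]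
        congr 1
        rw [Finset.mul_sum]; exact Finset.sum_congr rfl fun j _ => by ring
      rw [hexp]
      intro hzero
      by_cases hciu : (∑ j, c i j * u j) = 0
      · rw [hciu, mul_zero, add_zero] at hzero
        rcases Finset.mem_insert.mp hi with rfl | hi'
        · exact hub hciu
        · exact hv i hi' hzero
      · apply hzB
        rw [hB, Finset.mem_image]
        refine ⟨i, hi, ?_⟩
        field_simp
        linear_combination -hzero

lemma homog_degree {n k : ℕ} {p : MvPolynomial (Fin n) ℂ} (hp : p.IsHomogeneous k)
    {m : Fin n →₀ ℕ} (hm : coeff m p ≠ 0) : m.degree = k := by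
  have := hp hm
  exact (congrArg (fun f => f m) Finsupp.degree_eq_weight_one).trans this

lemma pderiv_isHomogeneous {n k : ℕ} {p : MvPolynomial (Fin n) ℂ} (j : Fin n)
    (hp : p.IsHomogeneous k) : (pderiv j p).IsHomogeneous (k - 1) := by
  classical
  rw [p.as_sum, map_sum]
  apply IsHomogeneous.sum
  intro m hm
  rw [pderiv_monomial]
  by_cases hmj : m j = 0
  · rw [hmj, Nat.cast_zero, mul_zero, (monomial _).map_zero]
    exact isHomogeneous_zero _ _ _
  · apply isHomogeneous_monomial
    have hdeg : m.degree = k := homog_degree hp (mem_support_iff.mp hm)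
    have hsum : m = (m - Finsupp.single j 1) + Finsupp.single j 1 := by
      ext k'
      by_cases hk : k' = j
      · subst hk; simp only [Finsupp.add_apply, Finsupp.tsub_apply, Finsupp.single_eq_same]; omega
      · simp [Finsupp.single_eq_of_ne' (Ne.symm hk)]
    have hdeg1 : (Finsupp.single j 1 : Fin n →₀ ℕ).degree = 1 := by
      rw [Finsupp.degree_apply, Finsupp.support_single_ne_zero _ one_ne_zero, Finset.sum_singleton,
        Finsupp.single_eq_same]
    have hadd : m.degree = (m - Finsupp.single j 1).degree + (Finsupp.single j 1 : Fin n →₀ ℕ).degree := by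
      conv_lhs => rw [hsum]
      simp only [Finsupp.degree_eq_weight_one, map_add]
    omega

lemma homog_zero_eq_C {n : ℕ} {p : MvPolynomial (Fin n) ℂ} (hp : p.IsHomogeneous 0) :
    p = C (coeff 0 p) := by
  ext m
  by_cases hm : m = 0
  · subst hm; simp
  · rw [hp.coeff_eq_zero (by rwa [Ne, Finsupp.degree_eq_zero_iff]), coeff_C, if_neg (Ne.symm hm)]

noncomputable def Dv {n : ℕ} (v : Fin n → ℂ) :
    Derivation ℂ (MvPolynomial (Fin n) ℂ) (MvPolynomial (Fin n) ℂ) :=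
  ∑ j, v j • pderiv j

lemma Dv_apply {n : ℕ} (v : Fin n → ℂ) (p : MvPolynomial (Fin n) ℂ) :
    Dv v p = ∑ j, v j • pderiv j p := by
  have h : ⇑(Dv v) = ∑ j, ⇑(v j • pderiv j (R := ℂ)) :=
    map_sum (Derivation.coeFnAddMonoidHom
      (R := ℂ) (A := MvPolynomial (Fin n) ℂ) (M := MvPolynomial (Fin n) ℂ)) _ _
  rw [show Dv v p = (⇑(Dv v)) p from rfl, h]
  simp [Derivation.coe_smul]

lemma Dv_isHomogeneous {n k : ℕ} (v : Fin n → ℂ) {p : MvPolynomial (Fin n) ℂ}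
    (hp : p.IsHomogeneous k) : (Dv v p).IsHomogeneous (k - 1) := by
  rw [Dv_apply]
  rw [← mem_homogeneousSubmodule]
  apply Submodule.sum_mem
  intro j _
  apply Submodule.smul_mem
  rw [mem_homogeneousSubmodule]
  exact pderiv_isHomogeneous j hp


section Gen
variable {n : ℕ} (D : Derivation ℂ (MvPolynomial (Fin n) ℂ) (MvPolynomial (Fin n) ℂ))
variable (ℓ : MvPolynomial (Fin n) ℂ) (κ : ℂ)

noncomputable def Phi (c : ℕ) (g : MvPolynomial (Fin n) ℂ) : MvPolynomial (Fin n) ℂ :=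
  c • (C κ * g) + ℓ * D g

noncomputable def FF (e : ℕ) : ℕ → MvPolynomial (Fin n) ℂ → MvPolynomial (Fin n) ℂ
  | 0, g => g
  | N+1, g => Phi D ℓ κ (e - N) (FF e N g)

lemma FF_iter (hκ : D ℓ = C κ) (e : ℕ) :
    ∀ N, N ≤ e → ∀ g, D^[N] (ℓ ^ e * g) = ℓ ^ (e - N) * FF D ℓ κ e N g := by
  intro N
  induction N with
  | zero => intro _ g; simp [FF]
  | succ N ih =>
    intro hNe g
    rw [Function.iterate_succ_apply', ih (by omega) g]
    show D _ = _
    rw [Derivation.leibniz, Derivation.leibniz_pow, hκ]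
    show _ = ℓ ^ (e - (N+1)) * Phi D ℓ κ (e - N) (FF D ℓ κ e N g)
    rw [Phi]
    have hpow : ℓ ^ (e - N) = ℓ ^ (e - (N+1)) * ℓ := by rw [← pow_succ]; congr 1; omega
    have hpow2 : e - N - 1 = e - (N+1) := by omega
    rw [hpow2, smul_eq_mul, smul_eq_mul, smul_eq_mul, nsmul_eq_mul, nsmul_eq_mul, hpow]
    ring

lemma FF_hom (hDhom : ∀ (k : ℕ) (p : MvPolynomial (Fin n) ℂ), p.IsHomogeneous k →
      (D p).IsHomogeneous (k - 1))
    (hD0 : ∀ p : MvPolynomial (Fin n) ℂ, p.IsHomogeneous 0 → D p = 0)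
    (hℓ : ℓ.IsHomogeneous 1) (e : ℕ) {k : ℕ} :
    ∀ N, ∀ g : MvPolynomial (Fin n) ℂ, g.IsHomogeneous k →
      (FF D ℓ κ e N g).IsHomogeneous k := by
  have hPhi : ∀ (c : ℕ) (q : MvPolynomial (Fin n) ℂ), q.IsHomogeneous k →
      (Phi D ℓ κ c q).IsHomogeneous k := by
    intro c q hq
    rw [Phi, ← mem_homogeneousSubmodule]
    apply add_mem
    · apply nsmul_mem
      rw [mem_homogeneousSubmodule]
      simpa using (isHomogeneous_C (Fin n) κ).mul hq
    · rw [mem_homogeneousSubmodule]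
      by_cases hk : k = 0
      · rw [hD0 q (hk ▸ hq), mul_zero]; exact isHomogeneous_zero _ _ _
      · have := hℓ.mul (hDhom k q hq)
        have hkk : 1 + (k - 1) = k := by omega
        rwa [hkk] at this
  intro N
  induction N with
  | zero => intro g hg; exact hg
  | succ N ih => intro g hg; exact hPhi _ _ (ih g hg)

lemma Phi_inj (hDhom : ∀ (k : ℕ) (p : MvPolynomial (Fin n) ℂ), p.IsHomogeneous k →
      (D p).IsHomogeneous (k - 1))
    (hD0 : ∀ p : MvPolynomial (Fin n) ℂ, p.IsHomogeneous 0 → D p = 0)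
    (hℓ : ℓ.IsHomogeneous 1) (hℓ0 : ℓ ≠ 0) (hκ : D ℓ = C κ) (hκ0 : κ ≠ 0) :
    ∀ (k c : ℕ), 1 ≤ c → ∀ g : MvPolynomial (Fin n) ℂ, g.IsHomogeneous k →
      Phi D ℓ κ c g = 0 → g = 0 := by
  intro k
  induction k with
  | zero =>
    intro c hc g hg hP
    rw [Phi, hD0 g hg, mul_zero, add_zero] at hP
    rw [← Nat.cast_smul_eq_nsmul ℂ, smul_eq_zero] at hP
    rcases hP with h | h
    · exact absurd (Nat.cast_eq_zero.mp h) (by omega)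
    · rcases mul_eq_zero.mp h with h | h
      · exact absurd (by simpa using h) hκ0
      · exact h
  | succ k ih =>
    intro c hc g hg hP
    have hcκ : ((c : ℂ) * κ) ≠ 0 := by
      exact mul_ne_zero (Nat.cast_ne_zero.mpr (by omega)) hκ0
    set w : MvPolynomial (Fin n) ℂ := (-((c : ℂ) * κ)⁻¹) • D g with hw
    have hgw : g = ℓ * w := by
      have h1 : (c : ℕ) • (C κ * g) = -(ℓ * D g) := by
        rw [Phi] at hP; linear_combination hP
      rw [hw, mul_smul_comm]
      have h2 : ((c : ℂ) * κ) • g = -(ℓ * D g) := by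
        rw [← h1, ← Nat.cast_smul_eq_nsmul ℂ, C_mul', smul_smul]
      calc g = (((c:ℂ)*κ)⁻¹ * ((c:ℂ)*κ)) • g := by rw [inv_mul_cancel₀ hcκ, one_smul]
        _ = ((c:ℂ)*κ)⁻¹ • (((c:ℂ)*κ) • g) := by rw [mul_smul]
        _ = ((c:ℂ)*κ)⁻¹ • (-(ℓ * D g)) := by rw [h2]
        _ = (-((c:ℂ)*κ)⁻¹) • (ℓ * D g) := by rw [smul_neg, neg_smul]
    have hwhom : w.IsHomogeneous k := by
      rw [hw, ← mem_homogeneousSubmodule]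
      apply Submodule.smul_mem
      rw [mem_homogeneousSubmodule]
      simpa using hDhom (k+1) g hg
    have hfact : Phi D ℓ κ c g = ℓ * Phi D ℓ κ (c+1) w := by
      rw [hgw, Phi, Phi, Derivation.leibniz, hκ]
      rw [smul_eq_mul, smul_eq_mul, nsmul_eq_mul, nsmul_eq_mul]
      push_cast
      ring
    rw [hfact] at hP
    have hPw : Phi D ℓ κ (c+1) w = 0 := by
      rcases mul_eq_zero.mp hP with h | h
      · exact absurd h hℓ0
      · exact h
    rw [hgw, ih (c+1) (by omega) w hwhom hPw, mul_zero]

lemma FF_inj (hDhom : ∀ (k : ℕ) (p : MvPolynomial (Fin n) ℂ), p.IsHomogeneous k →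
      (D p).IsHomogeneous (k - 1))
    (hD0 : ∀ p : MvPolynomial (Fin n) ℂ, p.IsHomogeneous 0 → D p = 0)
    (hℓ : ℓ.IsHomogeneous 1) (hℓ0 : ℓ ≠ 0) (hκ : D ℓ = C κ) (hκ0 : κ ≠ 0) (e : ℕ) {k : ℕ} :
    ∀ N, N ≤ e → ∀ g : MvPolynomial (Fin n) ℂ, g.IsHomogeneous k →
      FF D ℓ κ e N g = 0 → g = 0 := by
  intro N
  induction N with
  | zero => intro _ g _ h; exact h
  | succ N ih =>
    intro hNe g hg hFF
    have h1 : FF D ℓ κ e N g = 0 := by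
      apply Phi_inj D ℓ κ hDhom hD0 hℓ hℓ0 hκ hκ0 k (e - N) (by omega) _
        (FF_hom D ℓ κ hDhom hD0 hℓ e N g hg)
      exact hFF
    exact ih (by omega) g hg h1

lemma iter_kill (hκ : D ℓ = 0) (e : ℕ) :
    ∀ (N : ℕ) (g : MvPolynomial (Fin n) ℂ), D^[N] (ℓ ^ e * g) = ℓ ^ e * D^[N] g := by
  intro N
  induction N with
  | zero => intro g; rfl
  | succ N ih =>
    intro g
    rw [Function.iterate_succ_apply', Function.iterate_succ_apply', ih]
    rw [Derivation.leibniz, Derivation.leibniz_pow, hκ]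
    simp [smul_eq_mul]

lemma iter_vanish (hDhom : ∀ (k : ℕ) (p : MvPolynomial (Fin n) ℂ), p.IsHomogeneous k →
      (D p).IsHomogeneous (k - 1))
    (hD0 : ∀ p : MvPolynomial (Fin n) ℂ, p.IsHomogeneous 0 → D p = 0) :
    ∀ (N k : ℕ), k < N → ∀ g : MvPolynomial (Fin n) ℂ, g.IsHomogeneous k → D^[N] g = 0 := by
  intro N
  induction N with
  | zero => omega
  | succ N ih =>
    intro k hk g hg
    rw [Function.iterate_succ_apply]
    rcases Nat.eq_zero_or_pos k with rfl | hkpos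
    · rw [hD0 g hg]
      rw [Function.iterate_fixed (map_zero D)]
    · have := hDhom k g hg
      exact ih (k-1) (by omega) _ this

end Gen

lemma eval_linform {n : ℕ} {ℓ : MvPolynomial (Fin n) ℂ} (h : ℓ.IsHomogeneous 1)
    (w : Fin n → ℂ) : eval w ℓ = ∑ j, coeff (Finsupp.single j 1) ℓ * w j := by
  conv_lhs => rw [linform_eq ℓ h]
  rw [map_sum]
  simp

lemma Dv_X {n : ℕ} (v : Fin n → ℂ) (j : Fin n) : Dv v (X j) = C (v j) := by
  rw [Dv_apply, Finset.sum_eq_single j]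
  · rw [pderiv_X_self]; simp [smul_eq_C_mul]
  · intro b _ hb; rw [pderiv_X_of_ne (Ne.symm hb), smul_zero]
  · simp

lemma Dv_linform {n : ℕ} (v : Fin n → ℂ) {ℓ : MvPolynomial (Fin n) ℂ}
    (h : ℓ.IsHomogeneous 1) : Dv v ℓ = C (eval v ℓ) := by
  conv_lhs => rw [linform_eq ℓ h]
  rw [show (Dv v) (∑ j, C (coeff (Finsupp.single j 1) ℓ) * X j)
      = (Dv v).toLinearMap (∑ j, C (coeff (Finsupp.single j 1) ℓ) * X j) from rfl,
    map_sum, eval_linform h, map_sum]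
  apply Finset.sum_congr rfl
  intro j _
  show Dv v (C (coeff (Finsupp.single j 1) ℓ) * X j) = _
  rw [Derivation.leibniz, Dv_X]
  have : Dv v (C (coeff (Finsupp.single j 1) ℓ)) = 0 := by
    rw [show (C (coeff (Finsupp.single j 1) ℓ) : MvPolynomial (Fin n) ℂ)
        = algebraMap ℂ (MvPolynomial (Fin n) ℂ) (coeff (Finsupp.single j 1) ℓ) from rfl,
      Derivation.map_algebraMap]
  rw [this, smul_zero, add_zero, smul_eq_mul, ← C_mul, mul_comm]

lemma linform_coeff_ne {n : ℕ} {ℓ : MvPolynomial (Fin n) ℂ} (h : ℓ.IsHomogeneous 1)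
    (h0 : ℓ ≠ 0) : (fun j => coeff (Finsupp.single j 1) ℓ) ≠ 0 := by
  intro hc
  apply h0
  rw [linform_eq ℓ h]
  apply Finset.sum_eq_zero
  intro j _
  have : coeff (Finsupp.single j 1) ℓ = 0 := congrFun hc j
  rw [this, map_zero, zero_mul]

lemma linform_smul_of_coeff {n : ℕ} {ℓ₁ ℓ₂ : MvPolynomial (Fin n) ℂ}
    (h₁ : ℓ₁.IsHomogeneous 1) (h₂ : ℓ₂.IsHomogeneous 1) (z : ℂ)
    (hc : (fun j => coeff (Finsupp.single j 1) ℓ₁) = z • (fun j => coeff (Finsupp.single j 1) ℓ₂)) :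
    ℓ₁ = z • ℓ₂ := by
  rw [linform_eq ℓ₁ h₁, linform_eq ℓ₂ h₂, Finset.smul_sum]
  apply Finset.sum_congr rfl
  intro j _
  have : coeff (Finsupp.single j 1) ℓ₁ = z * coeff (Finsupp.single j 1) ℓ₂ := congrFun hc j
  rw [this, smul_eq_C_mul, ← mul_assoc, ← C_mul]

theorem jordan_aux {n m : ℕ} (s : Finset (Fin m)) :
    ∀ (d : ℕ) (ℓ : Fin m → MvPolynomial (Fin n) ℂ),
      (∀ i ∈ s, (ℓ i).IsHomogeneous 1) → (∀ i ∈ s, ℓ i ≠ 0) →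
      (∀ i ∈ s, ∀ j ∈ s, i ≠ j → ∀ c : ℂ, ℓ i ≠ c • ℓ j) →
      ∀ (r : Fin m → ℕ), (∀ i ∈ s, 1 ≤ r i) →
      ∀ (g : Fin m → MvPolynomial (Fin n) ℂ), (∀ i ∈ s, (g i).IsHomogeneous (r i - 1)) →
      ((∑ i ∈ s, r i) - 1 ≤ d) →
      ((∑ i ∈ s, ℓ i ^ (d + 1 - r i) * g i) = 0) →
      ∀ i ∈ s, g i = 0 := by
  induction s using Finset.strongInduction with
  | _ s ih =>
    intro d ℓ hhom hne hprop r hr g hg hd hsum i hi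
    have haS : i ∈ s := hi
    set a := i with ha
    -- numeric facts
    have hsplit : r a + ∑ x ∈ s.erase a, r x = ∑ x ∈ s, r x := Finset.add_sum_erase s r haS
    have hra := hr a haS
    have hdge : ∑ x ∈ s, r x ≤ d + 1 := by omega
    have hrj : ∀ j ∈ s.erase a, r a + r j ≤ ∑ x ∈ s, r x := by
      intro j hj
      have h1 : r j ≤ ∑ x ∈ s.erase a, r x :=
        Finset.single_le_sum (fun x _ => Nat.zero_le _) hj
      omega
    -- choose v
    set cvec : Fin m → Fin n → ℂ := fun i' j => coeff (Finsupp.single j 1) (ℓ i') with hcvec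
    obtain ⟨v, hv0, hvne⟩ : ∃ v : Fin n → ℂ, (∑ j, cvec a j * v j) = 0 ∧
        ∀ i' ∈ s.erase a, (∑ j, cvec i' j * v j) ≠ 0 := by
      apply avoid
      intro i' hi'
      have hi's : i' ∈ s := Finset.mem_of_mem_erase hi'
      have hia : i' ≠ a := Finset.ne_of_mem_erase hi'
      apply exists_perp
      · exact linform_coeff_ne (hhom a haS) (hne a haS)
      · intro z hz
        exact hprop i' hi's a haS hia z
          (linform_smul_of_coeff (hhom i' hi's) (hhom a haS) z hz)
    set D := Dv v with hD
    have hDhom : ∀ (k : ℕ) (p : MvPolynomial (Fin n) ℂ), p.IsHomogeneous k →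
        (D p).IsHomogeneous (k - 1) := fun k p hp => Dv_isHomogeneous v hp
    have hD0 : ∀ p : MvPolynomial (Fin n) ℂ, p.IsHomogeneous 0 → D p = 0 := by
      intro p hp
      rw [hD, homog_zero_eq_C hp,
        show (C (coeff 0 p) : MvPolynomial (Fin n) ℂ)
          = algebraMap ℂ (MvPolynomial (Fin n) ℂ) (coeff 0 p) from rfl,
        Derivation.map_algebraMap]
    have hκ : ∀ i' ∈ s, D (ℓ i') = C (eval v (ℓ i')) :=
      fun i' hi' => Dv_linform v (hhom i' hi')
    have hevala : eval v (ℓ a) = 0 := by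
      rw [eval_linform (hhom a haS)]; exact hv0
    have hκa : D (ℓ a) = 0 := by rw [hκ a haS, hevala, map_zero]
    have hκne : ∀ i' ∈ s.erase a, eval v (ℓ i') ≠ 0 := by
      intro i' hi'
      rw [eval_linform (hhom i' (Finset.mem_of_mem_erase hi'))]
      exact hvne i' hi'
    -- apply T = D^(r a) to the sum
    set T := ((Dv v).toLinearMap) ^ (r a) with hT
    have hTap : ∀ x, T x = (⇑D)^[r a] x := fun x => Module.End.pow_apply _ _ _
    have hT0 : ∑ i' ∈ s, T (ℓ i' ^ (d + 1 - r i') * g i') = 0 := by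
      rw [← map_sum, hsum, map_zero]
    rw [← Finset.add_sum_erase s _ haS] at hT0
    have hTa : T (ℓ a ^ (d + 1 - r a) * g a) = 0 := by
      rw [hTap, iter_kill D (ℓ a) hκa,
        iter_vanish D hDhom hD0 (r a) (r a - 1) (by omega) (g a) (hg a haS), mul_zero]
    rw [hTa, zero_add] at hT0
    have hTerm : ∀ i' ∈ s.erase a, T (ℓ i' ^ (d + 1 - r i') * g i')
        = ℓ i' ^ ((d - r a) + 1 - r i')
          * FF D (ℓ i') (eval v (ℓ i')) (d + 1 - r i') (r a) (g i') := by
      intro i' hi'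
      have hi's : i' ∈ s := Finset.mem_of_mem_erase hi'
      have hle : r a ≤ d + 1 - r i' := by
        have := hrj i' hi'; have := hr i' hi's; omega
      rw [hTap, FF_iter D (ℓ i') (eval v (ℓ i')) (hκ i' hi's) (d + 1 - r i') (r a) hle]
      congr 1
      congr 1
      have := hrj i' hi'; have := hr i' hi's; omega
    rw [Finset.sum_congr rfl hTerm] at hT0
    -- apply induction hypothesis
    have hFFzero : ∀ i' ∈ s.erase a,
        FF D (ℓ i') (eval v (ℓ i')) (d + 1 - r i') (r a) (g i') = 0 := by
      apply ih (s.erase a) (Finset.erase_ssubset haS) (d - r a) ℓ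
        (fun x hx => hhom x (Finset.mem_of_mem_erase hx))
        (fun x hx => hne x (Finset.mem_of_mem_erase hx))
        (fun x hx y hy => hprop x (Finset.mem_of_mem_erase hx) y (Finset.mem_of_mem_erase hy))
        r (fun x hx => hr x (Finset.mem_of_mem_erase hx))
      · intro x hx
        exact FF_hom D (ℓ x) (eval v (ℓ x)) hDhom hD0 (hhom x (Finset.mem_of_mem_erase hx))
          (d + 1 - r x) (r a) (g x) (hg x (Finset.mem_of_mem_erase hx))
      · omega
      · exact hT0
    have hgerase : ∀ i' ∈ s.erase a, g i' = 0 := by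
      intro i' hi'
      have hi's : i' ∈ s := Finset.mem_of_mem_erase hi'
      have hle : r a ≤ d + 1 - r i' := by
        have := hrj i' hi'; have := hr i' hi's; omega
      exact FF_inj D (ℓ i') (eval v (ℓ i')) hDhom hD0 (hhom i' hi's) (hne i' hi's)
        (hκ i' hi's) (hκne i' hi') (d + 1 - r i') (r a) hle (g i')
        (hg i' hi's) (hFFzero i' hi')
    -- conclude g a = 0
    rw [← Finset.add_sum_erase s _ haS] at hsum
    rw [Finset.sum_eq_zero (fun x hx => by rw [hgerase x hx, mul_zero]), add_zero] at hsum
    rcases mul_eq_zero.mp hsum with h | h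
    · exact absurd h (pow_ne_zero _ (hne a haS))
    · exact h

/-- Jordan's lemma for generalized additive decompositions: if
`∑_k ℓ_k^(d−r_k+1) g_k = 0` with pairwise non-proportional nonzero linear forms
`ℓ_k`, `g_k` homogeneous of degree `r_k − 1`, and `d ≥ r_1 + ⋯ + r_m − 1`,
then all `g_k` vanish. -/
theorem stmt7 (n m d : ℕ) (ℓ : Fin m → MvPolynomial (Fin n) ℂ)
    (hhom : ∀ i, (ℓ i).IsHomogeneous 1) (hne : ∀ i, ℓ i ≠ 0)
    (hprop : ∀ i j, i ≠ j → ∀ c : ℂ, ℓ i ≠ c • ℓ j)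
    (r : Fin m → ℕ) (hr : ∀ i, 1 ≤ r i)
    (g : Fin m → MvPolynomial (Fin n) ℂ)
    (hg : ∀ i, (g i).IsHomogeneous (r i - 1))
    (hd : (∑ i, r i) - 1 ≤ d)
    (hsum : ∑ i, ℓ i ^ (d + 1 - r i) * g i = 0) :
    ∀ i, g i = 0 := by
  intro i
  exact jordan_aux Finset.univ d ℓ (fun i _ => hhom i) (fun i _ => hne i)
    (fun i _ j _ hij => hprop i j hij) r (fun i _ => hr i) g (fun i _ => hg i)
    hd hsum i (Finset.mem_univ i)
end

section
/- Let a ≥ b ≥ 0 be integers with a + b ≥ 1, and let ζ ∈ ℂ be a primitive (a+1)-th root of unity. Then ∑_{k=0}^{a} ζ^k (ζ^k x_1 + x_2)^{a+b} = (a+1) · C(a+b, a) · x_1^a x_2^b in ℂ[x_1, x_2]. Consequently, for any integers a, b ≥ 0 with a + b ≥ 1, the Waring rank of the monomial x_1^a x_2^b satisfies WR(x_1^a x_2^b) ≤ max(a, b) + 1. -/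
open Finset


open MvPolynomial Finset

lemma rootsum (a b : ℕ) (hba : b ≤ a) (ζ : ℂ) (hζ : IsPrimitiveRoot ζ (a + 1))
    (m : ℕ) (hm : m ≤ a + b) :
    ∑ k ∈ Finset.range (a + 1), (ζ ^ (m + 1)) ^ k
      = if m = a then ((a : ℂ) + 1) else 0 := by
  rcases eq_or_ne m a with rfl | hne
  · simp only [if_pos rfl]
    have h1 : ζ ^ (m + 1) = 1 := hζ.pow_eq_one
    rw [h1]
    simp
  · rw [if_neg hne]
    have hne1 : ζ ^ (m + 1) ≠ 1 := by
      intro h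
      have hdvd : (a + 1) ∣ (m + 1) := (hζ.pow_eq_one_iff_dvd _).mp h
      have : m + 1 = a + 1 := by
        refine Nat.eq_of_dvd_of_lt_two_mul (Nat.succ_ne_zero m) hdvd ?_
        omega
      omega
    rw [geom_sum_eq hne1]
    have : (ζ ^ (m + 1)) ^ (a + 1) = 1 := by
      rw [← pow_mul, mul_comm, pow_mul, hζ.pow_eq_one, one_pow]
    rw [this]
    simp

lemma key (a b : ℕ) (hba : b ≤ a) (ζ : ℂ) (hζ : IsPrimitiveRoot ζ (a + 1)) :
    ∑ k ∈ Finset.range (a + 1), C (ζ ^ k) * (C (ζ ^ k) * X 0 + X 1) ^ (a + b)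
      = C (((a : ℂ) + 1) * ((a + b).choose a : ℂ)) *
          (X 0 ^ a * X 1 ^ b : MvPolynomial (Fin 2) ℂ) := by
  have expand : ∀ k, C (ζ ^ k) * (C (ζ ^ k) * X 0 + X 1) ^ (a + b)
      = ∑ m ∈ range (a + b + 1), C ((ζ ^ (m + 1)) ^ k) *
          (X 0 ^ m * X 1 ^ (a + b - m) * ((a + b).choose m : MvPolynomial (Fin 2) ℂ)) := by
    intro k
    rw [add_pow, Finset.mul_sum]
    refine Finset.sum_congr rfl fun m hm => ?_
    simp only [map_pow, mul_pow]
    ring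
  simp only [expand]
  rw [Finset.sum_comm]
  have step : ∀ m ∈ range (a + b + 1),
      (∑ k ∈ range (a + 1), C ((ζ ^ (m + 1)) ^ k) *
          (X 0 ^ m * X 1 ^ (a + b - m) * ((a + b).choose m : MvPolynomial (Fin 2) ℂ)))
      = C (if m = a then ((a : ℂ) + 1) else 0) *
          (X 0 ^ m * X 1 ^ (a + b - m) * ((a + b).choose m : MvPolynomial (Fin 2) ℂ)) := by
    intro m hm
    rw [← Finset.sum_mul, ← map_sum, rootsum a b hba ζ hζ m (Nat.lt_succ_iff.mp (Finset.mem_range.mp hm))]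
  rw [Finset.sum_congr rfl step]
  rw [Finset.sum_eq_single a]
  · rw [if_pos rfl]
    have : a + b - a = b := by omega
    rw [this, ← map_natCast (C : ℂ →+* MvPolynomial (Fin 2) ℂ), map_mul]
    ring
  · intro m _ hne
    rw [if_neg hne, map_zero, zero_mul]
  · intro h
    exact absurd (Finset.mem_range.mpr (by omega)) h

lemma decomp (a b : ℕ) (hba : b ≤ a) (hab : 1 ≤ a + b) :
    ∃ ℓ : Fin (a + 1) → MvPolynomial (Fin 2) ℂ,
      (∀ k, (ℓ k).IsHomogeneous 1) ∧
      (X 0 ^ a * X 1 ^ b : MvPolynomial (Fin 2) ℂ) = ∑ k, ℓ k ^ (a + b) := by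
  obtain ⟨ζ, hζ⟩ : ∃ ζ : ℂ, IsPrimitiveRoot ζ (a + 1) :=
    ⟨_, Complex.isPrimitiveRoot_exp (a + 1) (Nat.succ_ne_zero a)⟩
  set D : ℂ := ((a : ℂ) + 1) * ((a + b).choose a : ℂ) with hD
  have hD0 : D ≠ 0 := by
    apply mul_ne_zero
    · have : ((a : ℂ) + 1) = ((a + 1 : ℕ) : ℂ) := by push_cast; ring
      rw [this]
      exact_mod_cast Nat.succ_ne_zero a
    · exact_mod_cast Nat.pos_iff_ne_zero.mp (Nat.choose_pos (Nat.le_add_right a b))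
  have hroot : ∀ k : Fin (a + 1), ∃ c : ℂ, c ^ (a + b) = ζ ^ (k : ℕ) / D :=
    fun k => IsAlgClosed.exists_pow_nat_eq _ hab
  choose c hc using hroot
  refine ⟨fun k => MvPolynomial.C (c k) * (C (ζ ^ (k : ℕ)) * X 0 + X 1), fun k => ?_, ?_⟩
  · have h1 : (C (ζ ^ (k : ℕ)) * X 0 + X 1 : MvPolynomial (Fin 2) ℂ).IsHomogeneous 1 :=
      ((isHomogeneous_C _ _).mul (isHomogeneous_X _ _)).add (isHomogeneous_X _ _)
    simpa using (isHomogeneous_C _ (c k)).mul h1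
  · have hsum : ∑ k : Fin (a + 1), (C (c k) * (C (ζ ^ (k : ℕ)) * (X 0 : MvPolynomial (Fin 2) ℂ) + X 1)) ^ (a + b)
        = C D⁻¹ * ∑ k ∈ Finset.range (a + 1), C (ζ ^ k) * (C (ζ ^ k) * X 0 + X 1) ^ (a + b) := by
      rw [Finset.mul_sum, ← Fin.sum_univ_eq_sum_range
        (fun k => C D⁻¹ * (C (ζ ^ k) * (C (ζ ^ k) * X 0 + X 1) ^ (a + b)))]
      refine Finset.sum_congr rfl fun k _ => ?_
      rw [mul_pow, ← map_pow, hc, div_eq_inv_mul, map_mul]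
      ring
    have final : ∑ k : Fin (a + 1), (C (c k) * (C (ζ ^ (k : ℕ)) * (X 0 : MvPolynomial (Fin 2) ℂ) + X 1)) ^ (a + b)
        = (X 0 ^ a * X 1 ^ b : MvPolynomial (Fin 2) ℂ) := by
      refine hsum.trans ?_
      rw [key a b hba ζ hζ, ← hD, ← mul_assoc, ← map_mul, inv_mul_cancel₀ hD0, map_one, one_mul]
    exact final.symm



open MvPolynomial

/-- A Waring rank decomposition of `f` with exactly `r` summands:
`f = ∑_{k=1}^r ℓ_k ^ d` for linear forms `ℓ_k`. -/
def HasWaringDecomp (n d r : ℕ) (f : MvPolynomial (Fin n) ℂ) : Prop :=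
  ∃ ℓ : Fin r → MvPolynomial (Fin n) ℂ,
    (∀ k, (ℓ k).IsHomogeneous 1) ∧ f = ∑ k, ℓ k ^ d

/-- The Waring rank of `f` (as a form of degree `d`). -/
noncomputable def waringRank (n d : ℕ) (f : MvPolynomial (Fin n) ℂ) : ℕ :=
  sInf {r | HasWaringDecomp n d r f}


lemma decomp' (a b : ℕ) (hba : b ≤ a) (hab : 1 ≤ a + b) :
    HasWaringDecomp 2 (a + b) (a + 1) (X 0 ^ a * X 1 ^ b) :=
  decomp a b hba hab

lemma decomp2 (a b : ℕ) (hab : 1 ≤ a + b) :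
    HasWaringDecomp 2 (a + b) (max a b + 1) (X 0 ^ a * X 1 ^ b) := by
  rcases le_total b a with h | h
  · rw [max_eq_left h]
    exact decomp' a b h hab
  · obtain ⟨ℓ, hhom, heq⟩ := decomp' b a h (by omega)
    rw [max_eq_right h]
    refine ⟨fun k => rename (Equiv.swap (0 : Fin 2) 1) (ℓ k), fun k => (hhom k).rename_isHomogeneous, ?_⟩
    have : (X 0 ^ a * X 1 ^ b : MvPolynomial (Fin 2) ℂ)
        = rename (Equiv.swap (0 : Fin 2) 1) (X 0 ^ b * X 1 ^ a) := by
      simp [Equiv.swap_apply_left, Equiv.swap_apply_right, mul_comm]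
    rw [this, heq, map_sum]
    simp [add_comm b a]

/-- For `a ≥ b ≥ 0` with `a + b ≥ 1` and `ζ` a primitive `(a+1)`-th root of unity,
`∑_{k=0}^{a} ζ^k (ζ^k x₁ + x₂)^{a+b} = (a+1)·C(a+b, a)·x₁^a x₂^b`; consequently
the Waring rank of any monomial `x₁^a x₂^b` with `a + b ≥ 1` is at most `max a b + 1`. -/
theorem stmt10 (a b : ℕ) (hba : b ≤ a) (hab : 1 ≤ a + b)
    (ζ : ℂ) (hζ : IsPrimitiveRoot ζ (a + 1)) :
    (∑ k ∈ Finset.range (a + 1),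
        C (ζ ^ k) * (C (ζ ^ k) * X 0 + X 1) ^ (a + b)
      = C (((a : ℂ) + 1) * ((a + b).choose a : ℂ)) *
          (X 0 ^ a * X 1 ^ b : MvPolynomial (Fin 2) ℂ)) ∧
    (∀ a' b' : ℕ, 1 ≤ a' + b' →
      waringRank 2 (a' + b') (X 0 ^ a' * X 1 ^ b') ≤ max a' b' + 1) := by
  refine ⟨key a b hba ζ hζ, fun a' b' h => ?_⟩
  exact Nat.sInf_le (decomp2 a' b' h)
end

section
/- Let f ∈ ℂ[x_1,…,x_n]_d be a homogeneous polynomial of degree d ≥ 1 with border Waring rank W̲R(f) = 2. Then there exist linear forms ℓ_1, ℓ_2 ∈ ℂ[x_1,…,x_n]_1 such that either f = ℓ_1^d + ℓ_2^d or f = ℓ_1^{d−1} ℓ_2. -/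
open MvPolynomial Filter Topology

/-- Coefficient-wise convergence of a sequence of polynomials, which on the
finite-dimensional space of forms of bounded degree is convergence in the
Euclidean topology. -/
def TendstoPoly (n : ℕ) (g : ℕ → MvPolynomial (Fin n) ℂ)
    (f : MvPolynomial (Fin n) ℂ) : Prop :=
  ∀ m : Fin n →₀ ℕ, Tendsto (fun i => coeff m (g i)) atTop (𝓝 (coeff m f))

/-- The border Waring rank of `f`: the least `r` such that `f` is a limit of
polynomials of Waring rank at most `r`. -/
noncomputable def borderWaringRank (n d : ℕ) (f : MvPolynomial (Fin n) ℂ) : ℕ :=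
  sInf {r | ∃ g : ℕ → MvPolynomial (Fin n) ℂ,
    (∀ i, HasWaringDecomp n d r (g i)) ∧ TendstoPoly n g f}


namespace BR2

variable {n : ℕ}

/-- the linear form with coefficient vector `c` -/
noncomputable def lin (n : ℕ) (c : Fin n → ℂ) : MvPolynomial (Fin n) ℂ :=
  ∑ j, C (c j) * X j

lemma lin_isHomogeneous (c : Fin n → ℂ) : (lin n c).IsHomogeneous 1 :=
  IsHomogeneous.sum _ _ _ fun j _ => isHomogeneous_C_mul_X _ _

lemma coeff_lin (c : Fin n → ℂ) (m : Fin n →₀ ℕ) :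
    coeff m (lin n c) = ∑ j, c j * coeff m (X j) := by
  simp [lin, coeff_sum]

lemma coeff_lin_single (c : Fin n → ℂ) (j : Fin n) :
    coeff (Finsupp.single j 1) (lin n c) = c j := by
  rw [coeff_lin, Finset.sum_eq_single j]
  · simp [coeff_X']
  · intro k _ hk
    rw [coeff_X', if_neg, mul_zero]
    rw [Finsupp.single_left_inj one_ne_zero]
    exact hk
  · simp

lemma lin_smul (z : ℂ) (c : Fin n → ℂ) : lin n (z • c) = C z * lin n c := by
  simp [lin, Finset.mul_sum, mul_assoc]

lemma lin_add (c c' : Fin n → ℂ) : lin n (c + c') = lin n c + lin n c' := by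
  simp [lin, add_mul, Finset.sum_add_distrib]

lemma lin_ne_zero {c : Fin n → ℂ} (hc : c ≠ 0) : lin n c ≠ 0 := by
  obtain ⟨j, hj⟩ := Function.ne_iff.1 hc
  intro h
  apply hj
  have := coeff_lin_single c j
  rw [h] at this
  simpa using this.symm

lemma eval_lin (p : Fin n → ℂ) (c : Fin n → ℂ) :
    eval p (lin n c) = ∑ j, c j * p j := by
  simp [lin]

lemma degree_one_single {m : Fin n →₀ ℕ} (hm : m.degree = 1) :
    ∃ j, m = Finsupp.single j 1 := by
  have h1 : ∀ a ∈ m.support, 1 ≤ m a := fun a ha =>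
    Nat.one_le_iff_ne_zero.2 (Finsupp.mem_support_iff.1 ha)
  have hdd : m.support.sum m = 1 := hm
  have hcard : m.support.card ≤ 1 := by
    have h2 := Finset.card_nsmul_le_sum m.support m 1 h1
    rw [smul_eq_mul, mul_one] at h2
    omega
  have hne : m.support.card ≠ 0 := by
    intro h0
    rw [Finset.card_eq_zero] at h0
    rw [h0] at hdd
    simp at hdd
  have hc1 : m.support.card = 1 := by omega
  obtain ⟨a, ha, hma⟩ := Finsupp.card_support_eq_one.1 hc1
  refine ⟨a, ?_⟩
  have hma2 : m a ≠ 0 := ha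
  have hds : (Finsupp.single a (m a)).degree = m a := by
    exact Finsupp.degree_single a (m a)
  have hdeg : m a = 1 := by
    rw [hma] at hm
    rw [hds] at hm
    exact hm
  rw [hma, hdeg]

lemma linear_form_eq {ℓ : MvPolynomial (Fin n) ℂ} (h : ℓ.IsHomogeneous 1) :
    ℓ = lin n (fun j => coeff (Finsupp.single j 1) ℓ) := by
  apply MvPolynomial.ext
  intro m
  by_cases hm : ∃ j, m = Finsupp.single j 1
  · obtain ⟨j, rfl⟩ := hm
    rw [coeff_lin_single]
  · have h0 : coeff m ℓ = 0 := by
      apply h.coeff_eq_zero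
      intro hdeg
      exact hm (degree_one_single hdeg)
    rw [h0, coeff_lin]
    symm
    apply Finset.sum_eq_zero
    intro j _
    rw [coeff_X', if_neg, mul_zero]
    intro he
    exact hm ⟨j, he.symm⟩

end BR2
namespace BR2

variable {n : ℕ}

lemma tp_const (f : MvPolynomial (Fin n) ℂ) : TendstoPoly n (fun _ => f) f :=
  fun _ => tendsto_const_nhds

lemma tp_add {g h : ℕ → MvPolynomial (Fin n) ℂ} {f p : MvPolynomial (Fin n) ℂ}
    (h1 : TendstoPoly n g f) (h2 : TendstoPoly n h p) :
    TendstoPoly n (fun i => g i + h i) (f + p) := fun m => by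
  simpa [coeff_add] using (h1 m).add (h2 m)

lemma tp_mul {g h : ℕ → MvPolynomial (Fin n) ℂ} {f p : MvPolynomial (Fin n) ℂ}
    (h1 : TendstoPoly n g f) (h2 : TendstoPoly n h p) :
    TendstoPoly n (fun i => g i * h i) (f * p) := fun m => by
  simp only [coeff_mul]
  exact tendsto_finset_sum _ fun x _ => (h1 x.1).mul (h2 x.2)

lemma tp_pow {g : ℕ → MvPolynomial (Fin n) ℂ} {f : MvPolynomial (Fin n) ℂ}
    (h : TendstoPoly n g f) (k : ℕ) :
    TendstoPoly n (fun i => g i ^ k) (f ^ k) := by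
  induction k with
  | zero => simpa [pow_zero] using tp_const (1 : MvPolynomial (Fin n) ℂ)
  | succ k ih => simpa [pow_succ] using tp_mul ih h

lemma tp_smul {c : ℕ → ℂ} {c₀ : ℂ} (hc : Tendsto c atTop (𝓝 c₀))
    {g : ℕ → MvPolynomial (Fin n) ℂ} {f : MvPolynomial (Fin n) ℂ}
    (h : TendstoPoly n g f) :
    TendstoPoly n (fun i => c i • g i) (c₀ • f) := fun m => by
  simpa [coeff_smul, smul_eq_mul] using hc.mul (h m)

lemma tp_sum {ι : Type*} {s : Finset ι} {g : ι → ℕ → MvPolynomial (Fin n) ℂ}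
    {f : ι → MvPolynomial (Fin n) ℂ}
    (h : ∀ j ∈ s, TendstoPoly n (g j) (f j)) :
    TendstoPoly n (fun i => ∑ j ∈ s, g j i) (∑ j ∈ s, f j) := fun m => by
  simp only [coeff_sum]
  exact tendsto_finset_sum _ fun j hj => h j hj m

lemma tp_unique {g : ℕ → MvPolynomial (Fin n) ℂ} {f f' : MvPolynomial (Fin n) ℂ}
    (h : TendstoPoly n g f) (h' : TendstoPoly n g f') : f = f' := by
  apply MvPolynomial.ext
  intro m
  exact tendsto_nhds_unique (h m) (h' m)

lemma tp_subseq {g : ℕ → MvPolynomial (Fin n) ℂ} {f : MvPolynomial (Fin n) ℂ}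
    (h : TendstoPoly n g f) {φ : ℕ → ℕ} (hφ : StrictMono φ) :
    TendstoPoly n (fun i => g (φ i)) f :=
  fun m => (h m).comp hφ.tendsto_atTop

lemma tp_lin {u : ℕ → Fin n → ℂ} {u₀ : Fin n → ℂ}
    (hu : ∀ j, Tendsto (fun i => u i j) atTop (𝓝 (u₀ j))) :
    TendstoPoly n (fun i => lin n (u i)) (lin n u₀) := fun m => by
  simp only [coeff_lin]
  exact tendsto_finset_sum _ fun j _ => (hu j).mul tendsto_const_nhds

/-- a finite set containing the support of every homogeneous polynomial of degree `d` -/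
noncomputable def bigS (n d : ℕ) : Finset (Fin n →₀ ℕ) :=
  Finset.Iic (Finsupp.equivFunOnFinite.symm fun _ => d)

lemma support_subset_bigS {d : ℕ} {φ : MvPolynomial (Fin n) ℂ} (hφ : φ.IsHomogeneous d) :
    φ.support ⊆ bigS n d := by
  intro m hm
  rw [bigS, Finset.mem_Iic, Finsupp.le_def]
  intro j
  have hdeg : m.degree = d := by
    by_contra hne
    exact MvPolynomial.mem_support_iff.1 hm (hφ.coeff_eq_zero hne)
  have : m j ≤ d := hdeg ▸ Finsupp.le_degree j m
  exact this

lemma eval_eq_sum_bigS {d : ℕ} {φ : MvPolynomial (Fin n) ℂ} (hφ : φ.IsHomogeneous d)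
    (p : Fin n → ℂ) :
    eval p φ = ∑ m ∈ bigS n d, coeff m φ * ∏ j, p j ^ m j := by
  rw [eval_eq']
  refine Finset.sum_subset (support_subset_bigS hφ) ?_
  intro m _ hm
  rw [MvPolynomial.notMem_support_iff.1 hm, zero_mul]

lemma tp_eval {d : ℕ} {g : ℕ → MvPolynomial (Fin n) ℂ} {f : MvPolynomial (Fin n) ℂ}
    (hg : ∀ i, (g i).IsHomogeneous d) (hf : f.IsHomogeneous d)
    (h : TendstoPoly n g f) (p : Fin n → ℂ) :
    Tendsto (fun i => eval p (g i)) atTop (𝓝 (eval p f)) := by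
  have he : ∀ i, eval p (g i) = ∑ m ∈ bigS n d, coeff m (g i) * ∏ j, p j ^ m j :=
    fun i => eval_eq_sum_bigS (hg i) p
  rw [show (fun i => eval p (g i)) = fun i => ∑ m ∈ bigS n d, coeff m (g i) * ∏ j, p j ^ m j
      from funext he,
    eval_eq_sum_bigS hf]
  exact tendsto_finset_sum _ fun m _ => (h m).mul tendsto_const_nhds

lemma single_power {d : ℕ} {g : ℕ → MvPolynomial (Fin n) ℂ} {f : MvPolynomial (Fin n) ℂ}
    (htp : TendstoPoly n g f) (u : ℕ → Fin n → ℂ) (u₀ : Fin n → ℂ)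
    (hu : ∀ j, Tendsto (fun i => u i j) atTop (𝓝 (u₀ j))) (hu0 : u₀ ≠ 0)
    (μ : ℕ → ℂ) (hg : ∀ i, g i = μ i • (lin n (u i)) ^ d) :
    ∃ z : ℂ, f = z • (lin n u₀) ^ d := by
  have hP : (lin n u₀) ^ d ≠ 0 := pow_ne_zero _ (lin_ne_zero hu0)
  obtain ⟨m₀, hm₀⟩ := MvPolynomial.ne_zero_iff.1 hP
  have hD : Tendsto (fun i => coeff m₀ ((lin n (u i)) ^ d)) atTop
      (𝓝 (coeff m₀ ((lin n u₀) ^ d))) := tp_pow (tp_lin hu) d m₀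
  set Dl := coeff m₀ ((lin n u₀) ^ d) with hDl
  have hcoef : Tendsto (fun i => coeff m₀ (g i)) atTop (𝓝 (coeff m₀ f)) := htp m₀
  set z := coeff m₀ f * Dl⁻¹ with hz
  have hν : Tendsto (fun i => coeff m₀ (g i) * (coeff m₀ ((lin n (u i)) ^ d))⁻¹)
      atTop (𝓝 z) := hcoef.mul (hD.inv₀ hm₀)
  have hev : ∀ᶠ i in atTop, coeff m₀ ((lin n (u i)) ^ d) ≠ 0 := hD.eventually_ne hm₀
  have hμ : Tendsto μ atTop (𝓝 z) := by
    refine hν.congr' ?_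
    filter_upwards [hev] with i hi
    rw [hg i, coeff_smul, smul_eq_mul, mul_assoc, mul_inv_cancel₀ hi, mul_one]
  have h2 : TendstoPoly n g (z • (lin n u₀) ^ d) := by
    rw [show g = fun i => μ i • (lin n (u i)) ^ d from funext hg]
    exact tp_smul hμ (tp_pow (tp_lin hu) d)
  exact ⟨z, tp_unique htp h2⟩

end BR2
namespace BR2

variable {n : ℕ}

lemma binom (d : ℕ) (a b : ℂ) (U W : MvPolynomial (Fin n) ℂ) :
    (C a * U + C b * W) ^ d =
      ∑ j : Fin (d+1),
        (b ^ (j:ℕ) * a ^ (d - (j:ℕ)) * (d.choose (j:ℕ))) •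
          (U ^ (d - (j:ℕ)) * W ^ (j:ℕ)) := by
  rw [add_comm, add_pow,
    ← Fin.sum_univ_eq_sum_range
      (fun k => (C b * W)^k * (C a * U)^(d-k) * (d.choose k : MvPolynomial (Fin n) ℂ)) (d+1)]
  apply Finset.sum_congr rfl
  intro j _
  simp only [smul_eq_C_mul, map_mul, map_pow, map_natCast, mul_pow]
  ring

lemma euclid_coord {u : ℕ → EuclideanSpace ℂ (Fin n)} {u₀ : EuclideanSpace ℂ (Fin n)}
    (hu : Tendsto u atTop (𝓝 u₀)) (t : Fin n) :
    Tendsto (fun i => u i t) atTop (𝓝 (u₀ t)) :=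
  ((EuclideanSpace.proj (𝕜 := ℂ) t).continuous.tendsto u₀).comp hu

lemma sum_mul_conj (x y : EuclideanSpace ℂ (Fin n)) :
    ∑ t, x t * (starRingEnd ℂ) (y t) = (inner ℂ y x) := by
  rw [PiLp.inner_apply]
  exact Finset.sum_congr rfl fun t _ => by rw [RCLike.inner_apply]

lemma frame {d : ℕ} {f : MvPolynomial (Fin n) ℂ} (hf : f.IsHomogeneous d)
    {g : ℕ → MvPolynomial (Fin n) ℂ} (hgh : ∀ i, (g i).IsHomogeneous d)
    (htp : TendstoPoly n g f)
    {u w : ℕ → EuclideanSpace ℂ (Fin n)} {u₀ w₀ : EuclideanSpace ℂ (Fin n)}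
    (hu : Tendsto u atTop (𝓝 u₀)) (hw : Tendsto w atTop (𝓝 w₀))
    (hun : ‖u₀‖ = 1) (hwn : ‖w₀‖ = 1) (horth : (inner ℂ u₀ w₀) = 0)
    (lamS : ℕ → Fin (d+1) → ℂ)
    (hg : ∀ i, g i = ∑ j : Fin (d+1), lamS i j •
        ((lin n (u i)) ^ (d - (j : ℕ)) * (lin n (w i)) ^ (j : ℕ))) :
    ∃ lam : Fin (d+1) → ℂ,
      f = ∑ j : Fin (d+1), lam j • ((lin n u₀) ^ (d - (j : ℕ)) * (lin n w₀) ^ (j : ℕ)) ∧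
      ∀ j, Tendsto (fun i => lamS i j) atTop (𝓝 (lam j)) := by
  classical
  have hucoord : ∀ t, Tendsto (fun i => u i t) atTop (𝓝 (u₀ t)) := fun t => euclid_coord hu t
  have hwcoord : ∀ t, Tendsto (fun i => w i t) atTop (𝓝 (w₀ t)) := fun t => euclid_coord hw t
  set p : Fin (d+1) → Fin n → ℂ :=
    fun k t => (starRingEnd ℂ) (u₀ t) + ((k:ℕ):ℂ) * (starRingEnd ℂ) (w₀ t) with hp
  have e1 : (inner ℂ u₀ u₀) = 1 := by
    rw [inner_self_eq_norm_sq_to_K, hun]; norm_num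
  have e3 : (inner ℂ w₀ w₀) = 1 := by
    rw [inner_self_eq_norm_sq_to_K, hwn]; norm_num
  have e2 : (inner ℂ w₀ u₀) = 0 := by
    rw [← inner_conj_symm, horth, map_zero]
  have hEu : ∀ k, Tendsto (fun i => eval (p k) (lin n (u i))) atTop (𝓝 1) := by
    intro k
    have h1 : Tendsto (fun i => eval (p k) (lin n (u i))) atTop
        (𝓝 (eval (p k) (lin n u₀))) := by
      simp only [eval_lin]
      exact tendsto_finset_sum _ fun t _ => (hucoord t).mul tendsto_const_nhds
    have h2 : eval (p k) (lin n u₀) = 1 := by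
      rw [eval_lin]
      have hterm : ∀ t : Fin n, u₀ t * p k t =
          u₀ t * (starRingEnd ℂ) (u₀ t) + ((k:ℕ):ℂ) * (u₀ t * (starRingEnd ℂ) (w₀ t)) := by
        intro t; rw [hp]; ring
      rw [Finset.sum_congr rfl fun t _ => hterm t, Finset.sum_add_distrib, ← Finset.mul_sum,
        sum_mul_conj, sum_mul_conj, e1, e2, mul_zero, add_zero]
    rw [← h2]; exact h1
  have hEw : ∀ k : Fin (d+1), Tendsto (fun i => eval (p k) (lin n (w i))) atTop
      (𝓝 ((k:ℕ):ℂ)) := by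
    intro k
    have h1 : Tendsto (fun i => eval (p k) (lin n (w i))) atTop
        (𝓝 (eval (p k) (lin n w₀))) := by
      simp only [eval_lin]
      exact tendsto_finset_sum _ fun t _ => (hwcoord t).mul tendsto_const_nhds
    have h2 : eval (p k) (lin n w₀) = ((k:ℕ):ℂ) := by
      rw [eval_lin]
      have hterm : ∀ t : Fin n, w₀ t * p k t =
          w₀ t * (starRingEnd ℂ) (u₀ t) + ((k:ℕ):ℂ) * (w₀ t * (starRingEnd ℂ) (w₀ t)) := by
        intro t; rw [hp]; ring
      rw [Finset.sum_congr rfl fun t _ => hterm t, Finset.sum_add_distrib, ← Finset.mul_sum,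
        sum_mul_conj, sum_mul_conj, e3, horth, mul_one, zero_add]
    rw [← h2]; exact h1
  set M : ℕ → Matrix (Fin (d+1)) (Fin (d+1)) ℂ := fun i => Matrix.of fun k j =>
    (eval (p k) (lin n (u i))) ^ (d - (j:ℕ)) * (eval (p k) (lin n (w i))) ^ (j:ℕ) with hM
  set M0 : Matrix (Fin (d+1)) (Fin (d+1)) ℂ :=
    Matrix.vandermonde (fun k => ((k:ℕ):ℂ)) with hM0
  have hMt : Tendsto M atTop (𝓝 M0) := by
    refine tendsto_pi_nhds.2 ?_; intro k
    rw [tendsto_pi_nhds]; intro j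
    have := ((hEu k).pow (d - (j:ℕ))).mul ((hEw k).pow (j:ℕ))
    simpa [hM, hM0, Matrix.vandermonde] using this
  have hdet0 : M0.det ≠ 0 := by
    rw [hM0, Matrix.det_vandermonde]
    apply Finset.prod_ne_zero_iff.2
    intro k _
    apply Finset.prod_ne_zero_iff.2
    intro k' hk'
    have hlt : k < k' := Finset.mem_Ioi.1 hk'
    intro hzero
    rw [sub_eq_zero] at hzero
    have := Nat.cast_injective (R := ℂ) hzero
    have : (k':ℕ) = (k:ℕ) := by exact_mod_cast this
    omega
  have hdet : Tendsto (fun i => (M i).det) atTop (𝓝 M0.det) :=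
    ((Continuous.matrix_det continuous_id).tendsto M0).comp hMt
  have hadj : Tendsto (fun i => (M i).adjugate) atTop (𝓝 M0.adjugate) :=
    ((Continuous.matrix_adjugate continuous_id).tendsto M0).comp hMt
  have hadj' : ∀ j k, Tendsto (fun i => (M i).adjugate j k) atTop (𝓝 (M0.adjugate j k)) := by
    intro j k
    replace hadj := tendsto_pi_nhds.1 hadj
    have := hadj j
    rw [tendsto_pi_nhds] at this
    exact this k
  have hEg : ∀ k, Tendsto (fun i => eval (p k) (g i)) atTop (𝓝 (eval (p k) f)) :=
    fun k => tp_eval hgh hf htp (p k)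
  have hsys : ∀ i, (M i).mulVec (lamS i) = fun k => eval (p k) (g i) := by
    intro i
    funext k
    rw [hg i, map_sum]
    simp only [Matrix.mulVec, dotProduct, hM, Matrix.of_apply]
    apply Finset.sum_congr rfl
    intro j _
    rw [smul_eq_C_mul, map_mul, map_mul, map_pow, map_pow, eval_C]
    ring
  have hcram : ∀ i, ((M i).adjugate).mulVec (fun k => eval (p k) (g i)) = (M i).det • lamS i := by
    intro i
    rw [← hsys i, Matrix.mulVec_mulVec, Matrix.adjugate_mul, Matrix.smul_mulVec,
      Matrix.one_mulVec]
  set lam : Fin (d+1) → ℂ :=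
    fun j => M0.det⁻¹ * (M0.adjugate.mulVec (fun k => eval (p k) f)) j with hlam
  have hνt : ∀ j, Tendsto (fun i => (M i).det⁻¹ *
      (((M i).adjugate).mulVec (fun k => eval (p k) (g i))) j) atTop (𝓝 (lam j)) := by
    intro j
    apply (hdet.inv₀ hdet0).mul
    simp only [Matrix.mulVec, dotProduct]
    exact tendsto_finset_sum _ fun k _ => (hadj' j k).mul (hEg k)
  have hlamt : ∀ j, Tendsto (fun i => lamS i j) atTop (𝓝 (lam j)) := by
    intro j
    refine Tendsto.congr' ?_ (hνt j)
    filter_upwards [hdet.eventually_ne hdet0] with i hi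
    rw [hcram i, Pi.smul_apply, smul_eq_mul, inv_mul_cancel_left₀ hi]
  refine ⟨lam, ?_, hlamt⟩
  refine tp_unique htp ?_
  rw [show g = fun i => ∑ j : Fin (d+1), lamS i j •
      ((lin n (u i)) ^ (d - (j:ℕ)) * (lin n (w i)) ^ (j:ℕ)) from funext hg]
  exact tp_sum fun j _ => tp_smul (hlamt j) (tp_mul (tp_pow (tp_lin hucoord) _) (tp_pow (tp_lin hwcoord) _))

end BR2
namespace BR2

lemma key_id (β c e : ℂ) (d j : ℕ) (h1 : 1 ≤ j) (h2 : j ≤ d) :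
    (d:ℂ) * c^(j-1) * (β * e^j * c^(d-j) * (d.choose j)) =
    (d.choose j : ℂ) * e^(j-1) * (β * e^(1:ℕ) * c^(d-1) * (d.choose (1:ℕ))) := by
  rw [Nat.choose_one_right]
  have hc : c^(d-j) * c^(j-1) = c^(d-1) := by rw [← pow_add]; congr 1; omega
  have he' : e^(1:ℕ) * e^(j-1) = e^j := by rw [← pow_add]; congr 1; omega
  rw [← hc, ← he']
  ring

end BR2


set_option maxHeartbeats 2000000 in
open BR2 in
/-- Characterization of forms of border Waring rank 2: such a form is either a
sum of two `d`-th powers of linear forms or of the shape `ℓ₁^(d−1) ℓ₂`. -/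
theorem stmt13 (n d : ℕ) (hd : 1 ≤ d) (f : MvPolynomial (Fin n) ℂ)
    (hf : f.IsHomogeneous d) (h2 : borderWaringRank n d f = 2) :
    ∃ ℓ₁ ℓ₂ : MvPolynomial (Fin n) ℂ,
      ℓ₁.IsHomogeneous 1 ∧ ℓ₂.IsHomogeneous 1 ∧
      (f = ℓ₁ ^ d + ℓ₂ ^ d ∨ f = ℓ₁ ^ (d - 1) * ℓ₂) := by
  classical
  have hS : {r | ∃ g : ℕ → MvPolynomial (Fin n) ℂ,
      (∀ i, HasWaringDecomp n d r (g i)) ∧ TendstoPoly n g f}.Nonempty := by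
    by_contra hne
    rw [Set.not_nonempty_iff_eq_empty] at hne
    rw [borderWaringRank, hne, Nat.sInf_empty] at h2
    omega
  have h2mem : ∃ g : ℕ → MvPolynomial (Fin n) ℂ,
      (∀ i, HasWaringDecomp n d 2 (g i)) ∧ TendstoPoly n g f := by
    have hmem := Nat.sInf_mem hS
    rw [borderWaringRank] at h2
    rw [h2] at hmem
    exact hmem
  obtain ⟨g, hgdec, htp⟩ := h2mem
  rcases Nat.eq_zero_or_pos n with hn | hn
  · exfalso
    subst hn
    have hf0 : f = 0 := by
      apply MvPolynomial.ext; intro m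
      rw [coeff_zero]
      apply hf.coeff_eq_zero
      have hm0 : m = 0 := Subsingleton.elim m 0
      rw [hm0]
      have : (0 : Fin 0 →₀ ℕ).degree = 0 := by simp [Finsupp.degree]
      omega
    have h0mem : 0 ∈ {r | ∃ g : ℕ → MvPolynomial (Fin 0) ℂ,
        (∀ i, HasWaringDecomp 0 d r (g i)) ∧ TendstoPoly 0 g f} := by
      refine ⟨fun _ => 0, fun i => ⟨fun k => 0, fun k => k.elim0, by simp⟩, ?_⟩
      intro m
      rw [hf0, coeff_zero]
      exact tendsto_const_nhds
    have hle := Nat.sInf_le h0mem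
    rw [borderWaringRank] at h2
    have hle0 : sInf {r | ∃ g : ℕ → MvPolynomial (Fin 0) ℂ,
        (∀ i, HasWaringDecomp 0 d r (g i)) ∧ TendstoPoly 0 g f} = 0 := Nat.le_zero.1 hle
    exact absurd (hle0.symm.trans h2) (by norm_num)
  -- decompose each g i as a sum of two d-th powers of linear forms
  choose ℓs hℓhom hℓsum using hgdec
  have hgab : ∀ i, g i = ℓs i 0 ^ d + ℓs i 1 ^ d := by
    intro i
    rw [hℓsum i, Fin.sum_univ_two]
  have hgh : ∀ i, (g i).IsHomogeneous d := by
    intro i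
    rw [hgab i]
    have h1 : ((ℓs i 0) ^ d).IsHomogeneous d := by simpa using (hℓhom i 0).pow d
    have h2' : ((ℓs i 1) ^ d).IsHomogeneous d := by simpa using (hℓhom i 1).pow d
    exact h1.add h2'
  set x : ℕ → EuclideanSpace ℂ (Fin n) :=
    fun i => WithLp.toLp 2 (fun j => coeff (Finsupp.single j 1) (ℓs i 0)) with hxdef
  set y : ℕ → EuclideanSpace ℂ (Fin n) :=
    fun i => WithLp.toLp 2 (fun j => coeff (Finsupp.single j 1) (ℓs i 1)) with hydef
  have hax : ∀ i, ℓs i 0 = lin n (x i) := fun i => linear_form_eq (hℓhom i 0)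
  have hby : ∀ i, ℓs i 1 = lin n (y i) := fun i => linear_form_eq (hℓhom i 1)
  set uu : EuclideanSpace ℂ (Fin n) := EuclideanSpace.single ⟨0, hn⟩ 1 with huudef
  have huu : ‖uu‖ = 1 := by rw [huudef, EuclideanSpace.norm_single]; norm_num
  set u : ℕ → EuclideanSpace ℂ (Fin n) :=
    fun i => if x i = 0 then uu else (‖x i‖:ℂ)⁻¹ • x i with hudef
  set v : ℕ → EuclideanSpace ℂ (Fin n) :=
    fun i => if y i = 0 then uu else (‖y i‖:ℂ)⁻¹ • y i with hvdef
  have smul_norm_unit : ∀ z : EuclideanSpace ℂ (Fin n), z ≠ 0 → ‖(‖z‖:ℂ)⁻¹ • z‖ = 1 := by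
    intro z hz
    rw [norm_smul, norm_inv, Complex.norm_real, norm_norm]
    exact inv_mul_cancel₀ (norm_ne_zero_iff.2 hz)
  have hunorm : ∀ i, ‖u i‖ = 1 := by
    intro i
    rw [hudef]
    by_cases h : x i = 0
    · simp [h, huu]
    · simpa [h] using smul_norm_unit (x i) h
  have hvnorm : ∀ i, ‖v i‖ = 1 := by
    intro i
    rw [hvdef]
    by_cases h : y i = 0
    · simp [h, huu]
    · simpa [h] using smul_norm_unit (y i) h
  have hxu : ∀ i, x i = (‖x i‖:ℂ) • u i := by
    intro i
    by_cases h : x i = 0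
    · rw [h]; simp
    · have hui : u i = (‖x i‖:ℂ)⁻¹ • x i := by simp only [hudef]; rw [if_neg h]
      rw [hui, smul_smul, mul_inv_cancel₀, one_smul]
      exact Complex.ofReal_ne_zero.2 (norm_ne_zero_iff.2 h)
  have hyv : ∀ i, y i = (‖y i‖:ℂ) • v i := by
    intro i
    by_cases h : y i = 0
    · rw [h]; simp
    · have hvi : v i = (‖y i‖:ℂ)⁻¹ • y i := by simp only [hvdef]; rw [if_neg h]
      rw [hvi, smul_smul, mul_inv_cancel₀, one_smul]
      exact Complex.ofReal_ne_zero.2 (norm_ne_zero_iff.2 h)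
  set α : ℕ → ℂ := fun i => (‖x i‖:ℂ)^d with hαdef
  set β : ℕ → ℂ := fun i => (‖y i‖:ℂ)^d with hβdef
  have hgsc : ∀ i, g i = α i • (lin n (u i))^d + β i • (lin n (v i))^d := by
    intro i
    rw [hgab i, hax i, hby i, hxu i, hyv i]
    have hcast : ∀ (z : ℂ) (c : EuclideanSpace ℂ (Fin n)),
        lin n (z • c) = C z * lin n c := fun z c => lin_smul z c
    rw [WithLp.ofLp_smul, WithLp.ofLp_smul, hcast, hcast, mul_pow, mul_pow, ← map_pow, ← map_pow, ← smul_eq_C_mul, ← smul_eq_C_mul]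
  -- first extraction
  have hcsp : IsCompact ((Metric.sphere (0 : EuclideanSpace ℂ (Fin n)) 1) ×ˢ
      (Metric.sphere (0 : EuclideanSpace ℂ (Fin n)) 1)) :=
    (isCompact_sphere _ _).prod (isCompact_sphere _ _)
  obtain ⟨⟨u₀, v₀⟩, hmem, φ1, hφ1, hconv1⟩ := hcsp.tendsto_subseq
    (x := fun i => (u i, v i))
    (fun i => Set.mk_mem_prod (mem_sphere_zero_iff_norm.2 (hunorm i))
      (mem_sphere_zero_iff_norm.2 (hvnorm i)))
  have hu₀n : ‖u₀‖ = 1 := mem_sphere_zero_iff_norm.1 hmem.1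
  have hv₀n : ‖v₀‖ = 1 := mem_sphere_zero_iff_norm.1 hmem.2
  have hu₀ne : u₀ ≠ 0 := fun h => by rw [h, norm_zero] at hu₀n; norm_num at hu₀n
  have hu1 : Tendsto (fun i => u (φ1 i)) atTop (𝓝 u₀) :=
    (continuous_fst.tendsto _).comp hconv1
  have hv1 : Tendsto (fun i => v (φ1 i)) atTop (𝓝 v₀) :=
    (continuous_snd.tendsto _).comp hconv1
  set c : ℕ → ℂ := fun i => (inner ℂ (u i) (v i)) with hcdef
  set e : ℕ → ℝ := fun i => ‖v i - c i • u i‖ with hedef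
  set c₀ : ℂ := (inner ℂ u₀ v₀) with hc₀def
  have hc1 : Tendsto (fun i => c (φ1 i)) atTop (𝓝 c₀) := hu1.inner hv1
  by_cases hfr : ∃ᶠ i in atTop, v (φ1 i) - c (φ1 i) • u (φ1 i) = 0
  · -- degenerate case : a single d-th power in the limit
    obtain ⟨φ2, hφ2, hzero⟩ := extraction_of_frequently_atTop hfr
    set ψ : ℕ → ℕ := fun i => φ1 (φ2 i) with hψdef
    have hψSM : StrictMono ψ := hφ1.comp hφ2
    have hveq : ∀ i, v (ψ i) = c (ψ i) • u (ψ i) := by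
      intro i
      have := hzero i
      rwa [sub_eq_zero] at this
    set μ : ℕ → ℂ := fun i => α (ψ i) + β (ψ i) * (c (ψ i))^d with hμdef
    have hgid : ∀ i, g (ψ i) = μ i • (lin n (u (ψ i)))^d := by
      intro i
      rw [hgsc (ψ i), hveq i]
      have : lin n ((c (ψ i)) • u (ψ i)) = C (c (ψ i)) * lin n (u (ψ i)) := lin_smul _ _
      rw [WithLp.ofLp_smul, this, mul_pow, ← map_pow, ← smul_eq_C_mul, smul_smul, ← add_smul, hμdef]
    have huψ : Tendsto (fun i => u (ψ i)) atTop (𝓝 u₀) := hu1.comp hφ2.tendsto_atTop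
    have hucoords : ∀ t, Tendsto (fun i => u (ψ i) t) atTop (𝓝 (u₀ t)) :=
      fun t => euclid_coord huψ t
    obtain ⟨z, hz⟩ := single_power (tp_subseq htp hψSM) (fun i => u (ψ i)) u₀
      hucoords (by simpa using hu₀ne) μ hgid
    obtain ⟨zr, hzr⟩ := IsAlgClosed.exists_pow_nat_eq z (n := d) (by omega)
    refine ⟨C zr * lin n u₀, 0, (lin_isHomogeneous u₀).C_mul zr, isHomogeneous_zero _ _ _,
      Or.inl ?_⟩
    rw [zero_pow (by omega : d ≠ 0), add_zero, mul_pow, ← map_pow, hzr, ← smul_eq_C_mul]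
    exact hz
  · -- main case: build an orthonormal moving frame
    have hev : ∀ᶠ i in atTop, v (φ1 i) - c (φ1 i) • u (φ1 i) ≠ 0 := Filter.not_frequently.1 hfr
    obtain ⟨φ2, hφ2, hne⟩ := extraction_of_frequently_atTop hev.frequently
    set ψ : ℕ → ℕ := fun i => φ1 (φ2 i) with hψdef
    have hψSM : StrictMono ψ := hφ1.comp hφ2
    have heane : ∀ i, e (ψ i) ≠ 0 := fun i => norm_ne_zero_iff.2 (hne i)
    have henn : ∀ i, 0 ≤ e (ψ i) := fun i => norm_nonneg _
    set w : ℕ → EuclideanSpace ℂ (Fin n) :=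
      fun i => ((e (ψ i) : ℂ))⁻¹ • (v (ψ i) - c (ψ i) • u (ψ i)) with hwdef
    have hwnorm : ∀ i, ‖w i‖ = 1 := by
      intro i
      have hD : ‖v (ψ i) - c (ψ i) • u (ψ i)‖ = e (ψ i) := rfl
      simp only [hwdef]
      rw [norm_smul, hD, norm_inv, Complex.norm_real, Real.norm_eq_abs,
        abs_of_nonneg (henn i), inv_mul_cancel₀ (heane i)]
    obtain ⟨w₀, hw₀mem, φ3, hφ3, hwF⟩ :=
      (isCompact_sphere (0 : EuclideanSpace ℂ (Fin n)) 1).tendsto_subseq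
        (x := w) (fun i => mem_sphere_zero_iff_norm.2 (hwnorm i))
    have hw₀n : ‖w₀‖ = 1 := mem_sphere_zero_iff_norm.1 hw₀mem
    set Ψ : ℕ → ℕ := fun i => ψ (φ3 i) with hΨdef
    have hΨSM : StrictMono Ψ := hψSM.comp hφ3
    have huF : Tendsto (fun i => u (Ψ i)) atTop (𝓝 u₀) :=
      (hu1.comp hφ2.tendsto_atTop).comp hφ3.tendsto_atTop
    have hvF : Tendsto (fun i => v (Ψ i)) atTop (𝓝 v₀) :=
      (hv1.comp hφ2.tendsto_atTop).comp hφ3.tendsto_atTop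
    have hcF : Tendsto (fun i => c (Ψ i)) atTop (𝓝 c₀) := huF.inner hvF
    set e₀ : ℝ := ‖v₀ - c₀ • u₀‖ with he₀def
    have heF : Tendsto (fun i => e (Ψ i)) atTop (𝓝 e₀) := (hvF.sub (hcF.smul huF)).norm
    have heFC : Tendsto (fun i => ((e (Ψ i)):ℂ)) atTop (𝓝 (e₀:ℂ)) :=
      (Complex.continuous_ofReal.tendsto _).comp heF
    have hvdec : ∀ i, v (Ψ i) = c (Ψ i) • u (Ψ i) + ((e (Ψ i)):ℂ) • w (φ3 i) := by
      intro i
      simp only [hwdef, hΨdef]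
      rw [smul_smul, mul_inv_cancel₀ (Complex.ofReal_ne_zero.2 (heane (φ3 i))), one_smul,
        add_comm, sub_add_cancel]
    have horthF : ∀ i, (inner ℂ (u (Ψ i)) (w (φ3 i))) = 0 := by
      intro i
      simp only [hwdef, hΨdef]
      rw [inner_smul_right, inner_sub_right, inner_smul_right]
      have hself : (inner ℂ (u (ψ (φ3 i))) (u (ψ (φ3 i)))) = 1 := by
        rw [inner_self_eq_norm_sq_to_K, hunorm]; norm_num
      have hcc : (inner ℂ (u (ψ (φ3 i))) (v (ψ (φ3 i)))) = c (ψ (φ3 i)) := rfl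
      rw [hself, hcc, mul_one, sub_self, mul_zero]
    have horth₀ : @inner ℂ _ _ u₀ w₀ = 0 := by
      have hten : Tendsto (fun i => (inner ℂ (u (Ψ i)) (w (φ3 i)))) atTop
          (𝓝 (@inner ℂ _ _ u₀ w₀)) := huF.inner hwF
      rw [show (fun i => (inner ℂ (u (Ψ i)) (w (φ3 i)))) = fun _ => (0:ℂ)
        from funext horthF] at hten
      exact (tendsto_nhds_unique hten tendsto_const_nhds)
    set lamS : ℕ → Fin (d+1) → ℂ := fun i j =>
      β (Ψ i) * ((e (Ψ i)):ℂ)^(j:ℕ) * (c (Ψ i))^(d - (j:ℕ)) * (d.choose (j:ℕ)) +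
        (if j = 0 then α (Ψ i) else 0) with hlamSdef
    have hgid : ∀ i, g (Ψ i) = ∑ j : Fin (d+1), lamS i j •
        ((lin n (u (Ψ i))) ^ (d - (j:ℕ)) * (lin n (w (φ3 i))) ^ (j:ℕ)) := by
      intro i
      have hladd : lin n (c (Ψ i) • u (Ψ i) + ((e (Ψ i)):ℂ) • w (φ3 i)) =
          C (c (Ψ i)) * lin n (u (Ψ i)) + C ((e (Ψ i)):ℂ) * lin n (w (φ3 i)) := by
        rw [lin_add, lin_smul, lin_smul]
      have hβsum : β (Ψ i) • ((C (c (Ψ i)) * lin n (u (Ψ i)) +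
          C ((e (Ψ i)):ℂ) * lin n (w (φ3 i)))^d) =
          ∑ j : Fin (d+1), (β (Ψ i) * ((e (Ψ i)):ℂ)^(j:ℕ) * (c (Ψ i))^(d-(j:ℕ)) *
            (d.choose (j:ℕ))) •
            ((lin n (u (Ψ i))) ^ (d - (j:ℕ)) * (lin n (w (φ3 i))) ^ (j:ℕ)) := by
        rw [binom, Finset.smul_sum]
        apply Finset.sum_congr rfl
        intro j _
        rw [smul_smul]
        congr 1
        ring
      have hsplit : ∑ j : Fin (d+1), (if j = 0 then α (Ψ i) else 0) •
          ((lin n (u (Ψ i))) ^ (d - (j:ℕ)) * (lin n (w (φ3 i))) ^ (j:ℕ)) =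
          α (Ψ i) • (lin n (u (Ψ i)))^d := by
        rw [Finset.sum_eq_single (0 : Fin (d+1))]
        · simp
        · intro j _ hj; rw [if_neg hj, zero_smul]
        · intro h; exact absurd (Finset.mem_univ _) h
      rw [hgsc (Ψ i), hvdec i, WithLp.ofLp_add, WithLp.ofLp_smul, WithLp.ofLp_smul, hladd, hβsum]
      simp only [hlamSdef, add_smul, Finset.sum_add_distrib]
      rw [hsplit, add_comm]
    obtain ⟨lam, hfeq, hlamt⟩ := frame hf (fun i => hgh (Ψ i)) (tp_subseq htp hΨSM)
      huF hwF hu₀n hw₀n horth₀ lamS hgid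
    by_cases he0 : e₀ = 0
    · -- tangent case
      have hvlim : v₀ = c₀ • u₀ := by
        have h1 : Tendsto (fun i => v (Ψ i)) atTop (𝓝 (c₀ • u₀ + (e₀:ℂ) • w₀)) := by
          rw [show (fun i => v (Ψ i)) = fun i => c (Ψ i) • u (Ψ i) + ((e (Ψ i)):ℂ) • w (φ3 i)
            from funext hvdec]
          exact (hcF.smul huF).add (heFC.smul hwF)
        have h2' := tendsto_nhds_unique hvF h1
        rw [h2', he0, Complex.ofReal_zero, zero_smul, add_zero]
      have hc₀ne : c₀ ≠ 0 := by
        intro h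
        rw [hvlim, h, zero_smul, norm_zero] at hv₀n
        norm_num at hv₀n
      have hj0 : ∀ j : Fin (d+1), 2 ≤ (j:ℕ) → lam j = 0 := by
        intro j hj
        have hjne : j ≠ 0 := by
          intro h
          rw [h] at hj
          simp at hj
        have hjd : (j:ℕ) ≤ d := by omega
        set j1 : Fin (d+1) := ⟨1, by omega⟩ with hj1def
        have hj1ne : j1 ≠ 0 := by
          intro h
          have := congrArg Fin.val h
          simp [hj1def] at this
        have hid : ∀ i, (d:ℂ) * (c (Ψ i))^((j:ℕ)-1) * lamS i j =
            (d.choose (j:ℕ) : ℂ) * ((e (Ψ i)):ℂ)^((j:ℕ)-1) * lamS i j1 := by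
          intro i
          simp only [hlamSdef]
          rw [if_neg hjne, if_neg hj1ne, add_zero, add_zero]
          exact key_id _ _ _ d (j:ℕ) (by omega) hjd
        have hL : Tendsto (fun i => (d:ℂ) * (c (Ψ i))^((j:ℕ)-1) * lamS i j) atTop
            (𝓝 ((d:ℂ) * c₀^((j:ℕ)-1) * lam j)) :=
          (tendsto_const_nhds.mul (hcF.pow _)).mul (hlamt j)
        have hR : Tendsto (fun i => (d.choose (j:ℕ) : ℂ) * ((e (Ψ i)):ℂ)^((j:ℕ)-1) *
            lamS i j1) atTop
            (𝓝 ((d.choose (j:ℕ) : ℂ) * (e₀:ℂ)^((j:ℕ)-1) * lam j1)) :=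
          (tendsto_const_nhds.mul (heFC.pow _)).mul (hlamt j1)
        have heq := tendsto_nhds_unique (hL.congr hid) hR
        rw [he0] at heq
        have hzp : ((0:ℝ):ℂ) ^ ((j:ℕ)-1) = 0 := by
          rw [Complex.ofReal_zero, zero_pow]; omega
        rw [hzp, mul_zero, zero_mul] at heq
        have hdne : (d:ℂ) ≠ 0 := Nat.cast_ne_zero.2 (by omega)
        rcases mul_eq_zero.1 heq with h | h
        · rcases mul_eq_zero.1 h with h' | h'
          · exact absurd h' hdne
          · exact absurd h' (pow_ne_zero _ hc₀ne)
        · exact h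
      set j1 : Fin (d+1) := ⟨1, by omega⟩ with hj1def
      have h0nej1 : (0 : Fin (d+1)) ≠ j1 := by
        intro h
        have := congrArg Fin.val h
        simp [hj1def] at this
      have hpair : f = lam 0 • ((lin n u₀)^d) + lam j1 • ((lin n u₀)^(d-1) * lin n w₀) := by
        rw [hfeq]
        rw [← Finset.sum_subset (Finset.subset_univ {0, j1}) (by
          intro j _ hj
          have h0 : j ≠ 0 := by
            intro h; exact hj (by rw [h]; exact Finset.mem_insert_self _ _)
          have h1 : j ≠ j1 := by
            intro h; exact hj (by rw [h]; simp)
          have hval0 : (j:ℕ) ≠ 0 := by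
            intro h; exact h0 (Fin.ext (by simpa using h))
          have hval1 : (j:ℕ) ≠ 1 := by
            intro h; exact h1 (Fin.ext (by simpa [hj1def] using h))
          rw [hj0 j (by omega), zero_smul])]
        rw [Finset.sum_pair h0nej1]
        norm_num [hj1def]
      refine ⟨lin n u₀, lin n (lam 0 • u₀ + lam j1 • w₀), lin_isHomogeneous _,
        lin_isHomogeneous _, Or.inr ?_⟩
      rw [hpair, lin_add, lin_smul, lin_smul]
      have hUp : (lin n u₀)^(d-1) * lin n u₀ = (lin n u₀)^d := by
        rw [← pow_succ]; congr 1; omega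
      rw [smul_eq_C_mul, smul_eq_C_mul, ← hUp]
      ring
    · -- secant case
      have he₀C : ((e₀:ℝ):ℂ) ≠ 0 := Complex.ofReal_ne_zero.2 he0
      set jl : Fin (d+1) := Fin.last d with hjldef
      have hjlne : jl ≠ 0 := by
        intro h
        have := congrArg Fin.val h
        simp [hjldef, Fin.last] at this
        omega
      have hβrec : ∀ i, β (Ψ i) = lamS i jl * (((e (Ψ i)):ℂ)^d)⁻¹ := by
        intro i
        have hl : lamS i jl = β (Ψ i) * ((e (Ψ i)):ℂ)^d := by
          simp only [hlamSdef]
          rw [if_neg hjlne, add_zero]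
          simp [hjldef, Nat.sub_self]
        rw [hl, mul_inv_cancel_right₀ (pow_ne_zero _ (Complex.ofReal_ne_zero.2 (heane (φ3 i))))]
      set β₀ : ℂ := lam jl * ((e₀:ℂ)^d)⁻¹ with hβ₀def
      have hβt : Tendsto (fun i => β (Ψ i)) atTop (𝓝 β₀) := by
        rw [show (fun i => β (Ψ i)) = fun i => lamS i jl * (((e (Ψ i)):ℂ)^d)⁻¹
          from funext hβrec]
        exact (hlamt jl).mul ((heFC.pow d).inv₀ (pow_ne_zero _ he₀C))
      have hαrec : ∀ i, α (Ψ i) = lamS i 0 - β (Ψ i) * (c (Ψ i))^d := by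
        intro i
        have hl0 : lamS i 0 = β (Ψ i) * (c (Ψ i))^d + α (Ψ i) := by
          simp only [hlamSdef]
          simp
        rw [hl0]
        ring
      set α₀ : ℂ := lam 0 - β₀ * c₀^d with hα₀def
      have hαt : Tendsto (fun i => α (Ψ i)) atTop (𝓝 α₀) := by
        rw [show (fun i => α (Ψ i)) = fun i => lamS i 0 - β (Ψ i) * (c (Ψ i))^d
          from funext hαrec]
        exact (hlamt 0).sub (hβt.mul (hcF.pow d))
      have hfeq2 : f = α₀ • (lin n u₀)^d + β₀ • (lin n v₀)^d := by
        refine tp_unique (tp_subseq htp hΨSM) ?_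
        rw [show (fun i => g (Ψ i)) = fun i => α (Ψ i) • (lin n (u (Ψ i)))^d +
            β (Ψ i) • (lin n (v (Ψ i)))^d from funext fun i => hgsc (Ψ i)]
        exact tp_add (tp_smul hαt (tp_pow (tp_lin (fun t => euclid_coord huF t)) d))
          (tp_smul hβt (tp_pow (tp_lin (fun t => euclid_coord hvF t)) d))
      obtain ⟨z1, hz1⟩ := IsAlgClosed.exists_pow_nat_eq α₀ (n := d) (by omega)
      obtain ⟨z2, hz2⟩ := IsAlgClosed.exists_pow_nat_eq β₀ (n := d) (by omega)
      refine ⟨C z1 * lin n u₀, C z2 * lin n v₀, (lin_isHomogeneous _).C_mul _,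
        (lin_isHomogeneous _).C_mul _, Or.inl ?_⟩
      rw [hfeq2, mul_pow, mul_pow, ← map_pow, ← map_pow, hz1, hz2,
        ← smul_eq_C_mul, ← smul_eq_C_mul]
end
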